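/- arXiv:0809.3170 — 4 statements merged into one kernel-verified Lean document; each statement's English description precedes it below -/
import Mathlib

section
/- Let X_1,...,X_n be i.i.d. Gaussian with mean μ and variance σ². Define the sample mean X̄ = (Σ X_i)/n, σ̃ = √((1/n) Σ (X_i − X̄)²), and T̃ = X̄/σ̃. Then T̃ is a unimodal-likelihood estimator of θ = μ/σ: for any observation (x_1,...,x_n), the profile likelihood of the data over the parameterization by θ is non-decreasing for θ ≤ t̃ and non-increasing for θ ≥ t̃, where t̃ = x̄/σ̃ is the observed value. -/
open Real

/-- Profile log-likelihood kernel. -/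
private noncomputable def Hf (nn v a w t : ℝ) : ℝ :=
  nn * Real.log w - nn / 2 * (v ^ 2 * w ^ 2 + (a * w - t) ^ 2)

private lemma log_concave_comb {w w0 l : ℝ} (hw : 0 < w) (hw0 : 0 < w0)
    (hl : 0 ≤ l) (hl1 : l ≤ 1) :
    l * Real.log w + (1 - l) * Real.log w0 ≤ Real.log (l * w + (1 - l) * w0) := by
  have hwl : 0 < l * w + (1 - l) * w0 := by
    rcases eq_or_lt_of_le hl with h | h
    · simp [← h]; linarith
    · nlinarith
  have h1 : Real.log (w / (l * w + (1 - l) * w0)) ≤ w / (l * w + (1 - l) * w0) - 1 :=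
    Real.log_le_sub_one_of_pos (by positivity)
  have h2 : Real.log (w0 / (l * w + (1 - l) * w0)) ≤ w0 / (l * w + (1 - l) * w0) - 1 :=
    Real.log_le_sub_one_of_pos (by positivity)
  rw [Real.log_div (ne_of_gt hw) (ne_of_gt hwl)] at h1
  rw [Real.log_div (ne_of_gt hw0) (ne_of_gt hwl)] at h2
  have hsum : l * (w / (l * w + (1 - l) * w0)) + (1 - l) * (w0 / (l * w + (1 - l) * w0)) = 1 := by
    field_simp
  nlinarith [mul_le_mul_of_nonneg_left h1 hl,
    mul_le_mul_of_nonneg_left h2 (by linarith : (0:ℝ) ≤ 1 - l)]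

private lemma sq_comb (x y l : ℝ) (hl : 0 ≤ l) (hl1 : l ≤ 1) :
    (l * x + (1 - l) * y) ^ 2 ≤ l * x ^ 2 + (1 - l) * y ^ 2 := by
  nlinarith [sq_nonneg (x - y), mul_nonneg hl (sub_nonneg.2 hl1)]

private lemma Hf_concave (nn v a t t0 w w0 l : ℝ) (hnn : 0 ≤ nn)
    (hw : 0 < w) (hw0 : 0 < w0) (hl : 0 ≤ l) (hl1 : l ≤ 1) :
    l * Hf nn v a w t + (1 - l) * Hf nn v a w0 t0 ≤
      Hf nn v a (l * w + (1 - l) * w0) (l * t + (1 - l) * t0) := by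
  have hlog := log_concave_comb hw hw0 hl hl1
  have q1 : v ^ 2 * (l * w + (1 - l) * w0) ^ 2 ≤ l * (v ^ 2 * w ^ 2) + (1 - l) * (v ^ 2 * w0 ^ 2) := by
    nlinarith [sq_comb (v * w) (v * w0) l hl hl1]
  have q2 : (a * (l * w + (1 - l) * w0) - (l * t + (1 - l) * t0)) ^ 2 ≤
      l * (a * w - t) ^ 2 + (1 - l) * (a * w0 - t0) ^ 2 := by
    nlinarith [sq_comb (a * w - t) (a * w0 - t0) l hl hl1]
  have hfin := mul_le_mul_of_nonneg_left hlog hnn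
  have hq : nn / 2 * (v ^ 2 * (l * w + (1 - l) * w0) ^ 2 +
      (a * (l * w + (1 - l) * w0) - (l * t + (1 - l) * t0)) ^ 2) ≤
      nn / 2 * (l * (v ^ 2 * w ^ 2 + (a * w - t) ^ 2) +
        (1 - l) * (v ^ 2 * w0 ^ 2 + (a * w0 - t0) ^ 2)) :=
    mul_le_mul_of_nonneg_left (by linarith) (by linarith)
  simp only [Hf]
  nlinarith [hfin, hq]

private lemma Hf_bound (nn v a t w : ℝ) (hnn : 0 ≤ nn) (hv : 0 < v) (hw : 0 < w) :
    Hf nn v a w t ≤ nn * Real.log (1 / v) - nn / 2 := by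
  have h1 : Real.log (v * w) ≤ v * w - 1 := Real.log_le_sub_one_of_pos (by positivity)
  rw [Real.log_mul (ne_of_gt hv) (ne_of_gt hw)] at h1
  have h2 : Real.log (1 / v) = -Real.log v := by rw [one_div, Real.log_inv]
  have key : Real.log w - v ^ 2 * w ^ 2 / 2 ≤ -Real.log v - 1 / 2 := by
    nlinarith [sq_nonneg (v * w - 1)]
  simp only [Hf, h2]
  nlinarith [mul_le_mul_of_nonneg_left key hnn,
    mul_nonneg (by linarith : (0:ℝ) ≤ nn / 2) (sq_nonneg (a * w - t))]

private lemma Hf_peak (nn v a : ℝ) (hv : v ≠ 0) :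
    Hf nn v a (1 / v) (a / v) = nn * Real.log (1 / v) - nn / 2 := by
  have e1 : v ^ 2 * (1 / v) ^ 2 = 1 := by field_simp
  have e2 : a * (1 / v) - a / v = 0 := by ring
  simp only [Hf, e1, e2]
  norm_num

/-- For i.i.d. Gaussian data, `T̃ = X̄/σ̃` is a unimodal-likelihood estimator of
`θ = μ/σ`: for any observation `x`, the profile likelihood (the supremum of the
Gaussian likelihood over parameters `(μ, σ)` with `σ > 0` and `μ/σ = θ`) is
non-decreasing for `θ ≤ t̃` and non-increasing for `θ ≥ t̃`, where
`t̃ = x̄/σ̃` is the observed value of the estimator. -/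
theorem studentT_statistic_is_ULE (n : ℕ) (hn : 2 ≤ n) (x : Fin n → ℝ)
    (xbar : ℝ) (hxbar : xbar = (∑ i, x i) / n)
    (sig : ℝ) (hsig : sig = Real.sqrt ((∑ i, (x i - xbar) ^ 2) / n))
    (hsigpos : 0 < sig)
    (ttil : ℝ) (httil : ttil = xbar / sig)
    (L : ℝ → ℝ → ℝ)
    (hL : ∀ m s : ℝ, L m s =
      ∏ i, (1 / (Real.sqrt (2 * π) * s)) * exp (-(x i - m) ^ 2 / (2 * s ^ 2)))
    (P : ℝ → ℝ)
    (hP : ∀ θ : ℝ, P θ = sSup {y : ℝ | ∃ m s : ℝ, 0 < s ∧ m / s = θ ∧ y = L m s}) :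
    (∀ θ₁ θ₂ : ℝ, θ₁ ≤ θ₂ → θ₂ ≤ ttil → P θ₁ ≤ P θ₂) ∧
    (∀ θ₁ θ₂ : ℝ, ttil ≤ θ₁ → θ₁ ≤ θ₂ → P θ₂ ≤ P θ₁) := by
  have hnpos : (0:ℝ) < (n:ℝ) := by
    have : 0 < n := by omega
    exact_mod_cast this
  have hnn : (0:ℝ) ≤ (n:ℝ) := hnpos.le
  have h2pi : 0 < Real.sqrt (2 * π) := Real.sqrt_pos.2 (by positivity)
  set C : ℝ := (1 / Real.sqrt (2 * π)) ^ n with hC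
  have hCpos : 0 < C := by positivity
  -- sum of squares decomposition
  have hsum0 : ∑ i, (x i - xbar) = 0 := by
    rw [Finset.sum_sub_distrib, Finset.sum_const, Finset.card_univ, Fintype.card_fin, hxbar]
    rw [nsmul_eq_mul, mul_div_assoc', mul_div_cancel_left₀ _ hnpos.ne', sub_self]
  have hsig2 : (∑ i, (x i - xbar) ^ 2) = (n:ℝ) * sig ^ 2 := by
    have h0 : (0:ℝ) ≤ (∑ i, (x i - xbar) ^ 2) / n := by positivity
    rw [hsig, Real.sq_sqrt h0]
    field_simp
  have hsum : ∀ m : ℝ, ∑ i, (x i - m) ^ 2 = (n:ℝ) * sig ^ 2 + (n:ℝ) * (xbar - m) ^ 2 := by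
    intro m
    calc ∑ i, (x i - m) ^ 2
        = ∑ i, ((x i - xbar) ^ 2 + 2 * (xbar - m) * (x i - xbar) + (xbar - m) ^ 2) :=
          Finset.sum_congr rfl (fun i _ => by ring)
      _ = (∑ i, (x i - xbar) ^ 2) + 2 * (xbar - m) * (∑ i, (x i - xbar))
            + (n:ℝ) * (xbar - m) ^ 2 := by
          rw [Finset.sum_add_distrib, Finset.sum_add_distrib, ← Finset.mul_sum,
            Finset.sum_const, Finset.card_univ, Fintype.card_fin]
          ring
      _ = (n:ℝ) * sig ^ 2 + (n:ℝ) * (xbar - m) ^ 2 := by rw [hsum0, hsig2]; ring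
  -- likelihood in kernel form
  have hLval : ∀ m s : ℝ, 0 < s →
      L m s = C * Real.exp (Hf (n:ℝ) sig xbar (1 / s) (m / s)) := by
    intro m s hs
    rw [hL, Finset.prod_mul_distrib, Finset.prod_const, ← Real.exp_sum,
      Finset.card_univ, Fintype.card_fin]
    have e1 : (1 / (Real.sqrt (2 * π) * s)) ^ n = C * (1 / s) ^ n := by
      rw [hC, ← mul_pow]
      congr 1
      field_simp
    have e2 : (1 / s) ^ n = Real.exp ((n:ℝ) * Real.log (1 / s)) := by
      rw [Real.exp_nat_mul, Real.exp_log (by positivity)]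
    have e3 : ∑ i, -(x i - m) ^ 2 / (2 * s ^ 2)
        = -((n:ℝ) * sig ^ 2 + (n:ℝ) * (xbar - m) ^ 2) / (2 * s ^ 2) := by
      simp only [neg_div]
      rw [Finset.sum_neg_distrib, ← Finset.sum_div, hsum m]
    rw [e1, e2, e3, mul_assoc, ← Real.exp_add]
    congr 1
    simp only [Hf]
    have hs' : s ≠ 0 := ne_of_gt hs
    field_simp
    ring
  -- membership, nonemptiness and boundedness of the likelihood sets
  have hmem : ∀ θ s : ℝ, 0 < s →
      C * Real.exp (Hf (n:ℝ) sig xbar (1 / s) θ) ∈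
        {y : ℝ | ∃ m s' : ℝ, 0 < s' ∧ m / s' = θ ∧ y = L m s'} := by
    intro θ s hs
    refine ⟨θ * s, s, hs, mul_div_cancel_right₀ θ (ne_of_gt hs), ?_⟩
    rw [hLval (θ * s) s hs, mul_div_cancel_right₀ θ (ne_of_gt hs)]
  have hne : ∀ θ : ℝ, Set.Nonempty {y : ℝ | ∃ m s : ℝ, 0 < s ∧ m / s = θ ∧ y = L m s} :=
    fun θ => ⟨L θ 1, θ, 1, one_pos, div_one θ, rfl⟩
  have hub : ∀ θ : ℝ, ∀ y ∈ {y : ℝ | ∃ m s : ℝ, 0 < s ∧ m / s = θ ∧ y = L m s},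
      y ≤ C * Real.exp ((n:ℝ) * Real.log (1 / sig) - (n:ℝ) / 2) := by
    rintro θ y ⟨m, s, hs, hms, rfl⟩
    rw [hLval m s hs]
    exact mul_le_mul_of_nonneg_left
      (Real.exp_le_exp.2 (Hf_bound (n:ℝ) sig xbar (m / s) (1 / s) hnn hsigpos (by positivity)))
      hCpos.le
  have hbdd : ∀ θ : ℝ, BddAbove {y : ℝ | ∃ m s : ℝ, 0 < s ∧ m / s = θ ∧ y = L m s} :=
    fun θ => ⟨_, fun y hy => hub θ y hy⟩
  have hpeak : Hf (n:ℝ) sig xbar (1 / sig) ttil = (n:ℝ) * Real.log (1 / sig) - (n:ℝ) / 2 := by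
    rw [httil]
    exact Hf_peak (n:ℝ) sig xbar (ne_of_gt hsigpos)
  -- main monotone step: moving θ toward t̃ increases the profile likelihood
  have main : ∀ θ l : ℝ, 0 ≤ l → l ≤ 1 → P θ ≤ P (l * θ + (1 - l) * ttil) := by
    intro θ l hl hl1
    rw [hP, hP]
    apply csSup_le (hne θ)
    rintro y ⟨m, s, hs, hms, rfl⟩
    rw [hLval m s hs, hms]
    have hw : (0:ℝ) < 1 / s := by positivity
    have hw0 : (0:ℝ) < 1 / sig := by positivity
    have hw' : 0 < l * (1 / s) + (1 - l) * (1 / sig) := by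
      rcases eq_or_lt_of_le hl with h | h
      · simp [← h]; positivity
      · nlinarith [mul_nonneg (by linarith : (0:ℝ) ≤ 1 - l) hw0.le, mul_pos h hw]
    have hHle : Hf (n:ℝ) sig xbar (1 / s) θ ≤
        Hf (n:ℝ) sig xbar (l * (1 / s) + (1 - l) * (1 / sig)) (l * θ + (1 - l) * ttil) := by
      have h1 := Hf_concave (n:ℝ) sig xbar θ ttil (1 / s) (1 / sig) l hnn hw hw0 hl hl1
      have h2 := Hf_bound (n:ℝ) sig xbar θ (1 / s) hnn hsigpos hw
      rw [← hpeak] at h2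
      nlinarith [mul_le_mul_of_nonneg_left h2 (by linarith : (0:ℝ) ≤ 1 - l)]
    have hw'' : (0:ℝ) < 1 / (l * (1 / s) + (1 - l) * (1 / sig)) := by positivity
    have hmem' := hmem (l * θ + (1 - l) * ttil) (1 / (l * (1 / s) + (1 - l) * (1 / sig))) hw''
    rw [one_div_one_div] at hmem'
    refine le_trans ?_ (le_csSup (hbdd _) hmem')
    exact mul_le_mul_of_nonneg_left (Real.exp_le_exp.2 hHle) hCpos.le
  constructor
  · intro θ₁ θ₂ h12 h2t
    rcases eq_or_lt_of_le (h12.trans h2t) with h | h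
    · have : θ₂ = θ₁ := le_antisymm (h ▸ h2t) h12
      rw [this]
    · set l := (ttil - θ₂) / (ttil - θ₁) with hldef
      have hd : 0 < ttil - θ₁ := by linarith
      have hl : 0 ≤ l := div_nonneg (by linarith) hd.le
      have hl1 : l ≤ 1 := (div_le_one hd).2 (by linarith)
      have hcomb : l * θ₁ + (1 - l) * ttil = θ₂ := by
        rw [hldef]
        field_simp
        ring
      have := main θ₁ l hl hl1
      rwa [hcomb] at this
  · intro θ₁ θ₂ ht1 h12
    rcases eq_or_lt_of_le (ht1.trans h12) with h | h
    · have : θ₁ = θ₂ := le_antisymm h12 (h ▸ ht1)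
      rw [this]
    · set l := (θ₁ - ttil) / (θ₂ - ttil) with hldef
      have hd : 0 < θ₂ - ttil := by linarith
      have hl : 0 ≤ l := div_nonneg (by linarith) hd.le
      have hl1 : l ≤ 1 := (div_le_one hd).2 (by linarith)
      have hcomb : l * θ₂ + (1 - l) * ttil = θ₁ := by
        rw [hldef]
        field_simp
        ring
      have := main θ₂ l hl hl1
      rwa [hcomb] at this
end

section
/- Let Z_1, Z_2, ... be i.i.d. exponential random variables with mean 1 and let 1 ≤ k_1 < k_2 < ... be positive integers with 0 = z_0 < z_1 < z_2 < ... positive reals. Define recursively w(0,1) = 1, w(ℓ,1) = 1, and w(ℓ,q) = Σ_{i=1}^{k_r} w(r,i)·(z_ℓ − z_r)^{q−i}/(q−i)! for k_r < q ≤ k_{r+1}, r = 0,...,ℓ−1. Then Pr{Σ_{q=1}^{k_j} Z_q > z_j for all j = 1,...,ℓ} = e^{−z_ℓ} Σ_{q=1}^{k_ℓ} w(ℓ,q). -/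
open MeasureTheory ProbabilityTheory Real Set
open scoped ENNReal

namespace ExpCrossAux

noncomputable def nu : Measure ℝ := expMeasure 1

instance : IsProbabilityMeasure nu := isProbabilityMeasure_expMeasure one_pos

/-- truncated partial sum of coordinates -/
def T {n : ℕ} (m : ℕ) (x : Fin n → ℝ) : ℝ := ∑ j : Fin n, if (j : ℕ) < m then x j else 0

lemma measurable_T {n m : ℕ} : Measurable (T (n := n) m) := by
  apply Finset.measurable_sum
  intro j _
  by_cases h : (j : ℕ) < m <;> simp [h, measurable_pi_apply]

@[simp] lemma T_zero {n : ℕ} (x : Fin n → ℝ) : T 0 x = 0 := by simp [T]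

lemma T_succ_tail {n : ℕ} (m : ℕ) (x : Fin (n + 1) → ℝ) :
    T (m + 1) x = x 0 + T m (Fin.tail x) := by
  unfold T
  rw [Fin.sum_univ_succ]
  simp [Fin.tail, Nat.succ_lt_succ_iff]

lemma T_one {n : ℕ} (x : Fin (n + 1) → ℝ) : T 1 x = x 0 := by
  rw [T_succ_tail, T_zero, add_zero]

lemma T_eq_sum_range {n m : ℕ} (h : m ≤ n) (f : ℕ → ℝ) :
    T m (fun j : Fin n => f (j : ℕ)) = ∑ q ∈ Finset.range m, f q := by
  unfold T
  rw [Fin.sum_univ_eq_sum_range (fun j => if j < m then f j else 0) n]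
  rw [← Finset.sum_subset (Finset.range_subset_range.mpr h)]
  · exact Finset.sum_congr rfl fun j hj => if_pos (Finset.mem_range.mp hj)
  · intro j _ hj
    exact if_neg (by simpa using hj)

lemma exponentialPDF_one (u : ℝ) :
    exponentialPDF 1 u = ENNReal.ofReal (if 0 ≤ u then exp (-u) else 0) := by
  rw [exponentialPDF_eq]; simp

lemma nu_apply {s : Set ℝ} (hs : MeasurableSet s) :
    nu s = ∫⁻ x in s, exponentialPDF 1 x := by
  rw [nu, expMeasure, gammaMeasure, withDensity_apply _ hs]
  rfl

lemma nu_Ioi {t : ℝ} (ht : 0 ≤ t) : nu (Ioi t) = ENNReal.ofReal (exp (-t)) := by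
  rw [nu_apply measurableSet_Ioi]
  have h1 : ∀ x ∈ Ioi t, exponentialPDF 1 x = ENNReal.ofReal (exp (-x)) := by
    intro x hx
    rw [exponentialPDF_one, if_pos (le_of_lt (lt_of_le_of_lt ht hx))]
  rw [setLIntegral_congr_fun_ae measurableSet_Ioi (ae_of_all _ h1)]
  have hInt : IntegrableOn (fun x => exp (-x)) (Ioi t) := by
    simpa using exp_neg_integrableOn_Ioi t one_pos
  rw [← ofReal_integral_eq_lintegral_ofReal hInt (ae_of_all _ fun x => (exp_pos _).le),
    integral_exp_neg_Ioi]

lemma nu_Iic_zero : nu (Iic 0) = 0 := by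
  have h := measure_univ (μ := nu)
  have : nu (Iic 0) + nu (Ioi 0) = 1 := by
    rw [← measure_union (Iic_disjoint_Ioi le_rfl) measurableSet_Ioi, Iic_union_Ioi, h]
  rw [nu_Ioi le_rfl] at this
  have h2 : nu (Iic 0) + 1 = 0 + 1 := by simpa using this
  exact (ENNReal.add_left_inj ENNReal.one_ne_top).mp h2

noncomputable def Pn (n : ℕ) : Measure (Fin n → ℝ) := Measure.pi fun _ => nu

instance (n : ℕ) : IsProbabilityMeasure (Pn n) := by
  unfold Pn; infer_instance

lemma Pn_succ_eq (n : ℕ) {B : Set (ℝ × (Fin n → ℝ))} (hB : MeasurableSet B) :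
    Pn (n + 1) {x | (x 0, Fin.tail x) ∈ B} = ∫⁻ u, Pn n {y | (u, y) ∈ B} ∂nu := by
  have mp : MeasurePreserving (MeasurableEquiv.piFinSuccAbove (fun _ : Fin (n+1) => ℝ) 0)
      (Pn (n + 1)) (nu.prod (Pn n)) :=
    measurePreserving_piFinSuccAbove (fun _ : Fin (n+1) => nu) 0
  have hpt : ∀ x : Fin (n+1) → ℝ,
      ((MeasurableEquiv.piFinSuccAbove (fun _ : Fin (n+1) => ℝ) 0) x ∈ B)
        ↔ ((x 0, Fin.tail x) ∈ B) := by
    intro x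
    simp [MeasurableEquiv.piFinSuccAbove_apply]
  have hpre : (MeasurableEquiv.piFinSuccAbove (fun _ : Fin (n+1) => ℝ) 0) ⁻¹' B
      = {x : Fin (n+1) → ℝ | (x 0, Fin.tail x) ∈ B} := by
    ext x
    exact hpt x
  rw [← hpre, mp.measure_preimage hB.nullMeasurableSet, Measure.prod_apply hB]
  rfl

lemma measurable_expPDF : Measurable (exponentialPDF 1) :=
  (measurable_gammaPDFReal 1 1).ennreal_ofReal

lemma nu_lintegral {f : ℝ → ℝ≥0∞} (hf : Measurable f) :
    ∫⁻ u, f u ∂nu = ∫⁻ u, exponentialPDF 1 u * f u := by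
  rw [nu, expMeasure, gammaMeasure,
    lintegral_withDensity_eq_lintegral_mul _ (show Measurable (gammaPDF 1 1) from (measurable_gammaPDFReal 1 1).ennreal_ofReal) hf]
  rfl

lemma integral_aux {s t : ℝ} (hst : s ≤ t) (m : ℕ) :
    ∫ u in s..t, exp (-t) * (t - u) ^ m / m.factorial
      = exp (-t) * (t - s) ^ (m + 1) / (m + 1).factorial := by
  have h1 : ∫ u in s..t, exp (-t) * (t - u) ^ m / m.factorial
      = (exp (-t) / m.factorial) * ∫ u in s..t, (t - u) ^ m := by
    rw [← intervalIntegral.integral_const_mul]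
    congr 1; ext u; ring
  have h2 : ∫ u in s..t, (t - u) ^ m = (t - s) ^ (m + 1) / (m + 1) := by
    rw [intervalIntegral.integral_comp_sub_left (fun x => x ^ m) t, sub_self, integral_pow]
    simp
  rw [h1, h2, Nat.factorial_succ, div_mul_div_comm]
  push_cast
  rw [mul_comm ((m.factorial : ℝ)) ((m : ℝ) + 1)]

/-- the inner if-version of the gamma slice value -/
noncomputable def Gv (m : ℕ) (t : ℝ) : ℝ :=
  if 0 ≤ t then exp (-t) * t ^ m / m.factorial else 0

lemma measurable_Gv (m : ℕ) : Measurable fun t => Gv m t := by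
  unfold Gv
  apply Measurable.ite measurableSet_Ici _ measurable_const
  exact ((measurable_id.neg.exp.mul (measurable_id.pow_const m)).div_const _)

lemma Pn_gamma : ∀ (m : ℕ) (t : ℝ),
    Pn (m + 1) {x | T m x ≤ t ∧ t < T (m + 1) x} = ENNReal.ofReal (Gv m t) := by
  intro m
  induction m with
  | zero =>
    intro t
    have hB : MeasurableSet {p : ℝ × (Fin 0 → ℝ) | 0 ≤ t ∧ t < p.1} :=
      MeasurableSet.inter (MeasurableSet.const _) (measurableSet_lt measurable_const measurable_fst)
    have hset : {x : Fin 1 → ℝ | T 0 x ≤ t ∧ t < T 1 x}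
        = {x : Fin 1 → ℝ | (x 0, Fin.tail x) ∈ {p : ℝ × (Fin 0 → ℝ) | 0 ≤ t ∧ t < p.1}} := by
      ext x; simp [T_one]
    rw [hset, Pn_succ_eq 0 hB]
    simp only [Set.mem_setOf_eq]
    by_cases ht : 0 ≤ t
    · have hpt : (fun u => Pn 0 {y : Fin 0 → ℝ | 0 ≤ t ∧ t < u})
          = fun u => (Ioi t).indicator 1 u := by
        funext u
        by_cases hu : t < u
        · have : {y : Fin 0 → ℝ | 0 ≤ t ∧ t < u} = univ := by
            ext y; simp [ht, hu]
          simp [this, indicator_of_mem (show u ∈ Ioi t from hu)]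
        · have : {y : Fin 0 → ℝ | 0 ≤ t ∧ t < u} = ∅ := by
            ext y; simp [hu]
          simp [this, indicator_of_notMem (show u ∉ Ioi t from hu)]
      rw [hpt, lintegral_indicator_one measurableSet_Ioi, nu_Ioi ht]
      simp [Gv, ht]
    · have hpt : (fun u => Pn 0 {y : Fin 0 → ℝ | 0 ≤ t ∧ t < u}) = fun _ => 0 := by
        funext u
        have : {y : Fin 0 → ℝ | 0 ≤ t ∧ t < u} = ∅ := by ext y; simp [ht]
        simp [this]
      rw [hpt, lintegral_zero]
      simp [Gv, ht]
  | succ m ih =>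
    intro t
    have hB : MeasurableSet {p : ℝ × (Fin (m+1) → ℝ) |
        p.1 + T m p.2 ≤ t ∧ t < p.1 + T (m+1) p.2} := by
      apply MeasurableSet.inter
      · exact measurableSet_le (measurable_fst.add (measurable_T.comp measurable_snd))
          measurable_const
      · exact measurableSet_lt measurable_const
          (measurable_fst.add (measurable_T.comp measurable_snd))
    have hset : {x : Fin (m+2) → ℝ | T (m+1) x ≤ t ∧ t < T (m+2) x}
        = {x : Fin (m+2) → ℝ | (x 0, Fin.tail x) ∈ {p : ℝ × (Fin (m+1) → ℝ) |
            p.1 + T m p.2 ≤ t ∧ t < p.1 + T (m+1) p.2}} := by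
      ext x
      simp only [mem_setOf_eq, T_succ_tail]
    rw [hset, Pn_succ_eq (m+1) hB]
    simp only [Set.mem_setOf_eq]
    have hin : ∀ u : ℝ, Pn (m+1) {y : Fin (m+1) → ℝ | u + T m y ≤ t ∧ t < u + T (m+1) y}
        = ENNReal.ofReal (Gv m (t - u)) := by
      intro u
      have : {y : Fin (m+1) → ℝ | u + T m y ≤ t ∧ t < u + T (m+1) y}
          = {y : Fin (m+1) → ℝ | T m y ≤ t - u ∧ t - u < T (m+1) y} := by
        ext y
        constructor
        · rintro ⟨h1, h2⟩; constructor <;> linarith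
        · rintro ⟨h1, h2⟩; constructor <;> linarith
      rw [this, ih]
    simp only [hin]
    rw [nu_lintegral (f := fun u => ENNReal.ofReal (Gv m (t - u)))
      (by exact ((measurable_Gv m).comp (measurable_const.sub measurable_id)).ennreal_ofReal)]
    have hcomb : (fun u => exponentialPDF 1 u * ENNReal.ofReal (Gv m (t - u)))
        = fun u => ENNReal.ofReal
            ((Icc 0 t).indicator (fun u => exp (-t) * (t - u) ^ m / m.factorial) u) := by
      funext u
      rw [exponentialPDF_one, ← ENNReal.ofReal_mul (by positivity)]
      congr 1
      by_cases hu : 0 ≤ u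
      · by_cases htu : 0 ≤ t - u
        · rw [if_pos hu, Gv, if_pos htu,
            indicator_of_mem (show u ∈ Icc 0 t by constructor <;> linarith)]
          rw [show -t = -u + -(t - u) by ring, Real.exp_add]
          ring
        · rw [Gv, if_neg htu, indicator_of_notMem (show u ∉ Icc 0 t by
            intro hmem; exact htu (by linarith [hmem.2]))]
          simp
      · rw [if_neg hu, indicator_of_notMem (show u ∉ Icc 0 t by
          intro hmem; exact hu hmem.1)]
        simp
    rw [hcomb]
    by_cases ht : 0 ≤ t
    · have hcont : Continuous (fun u : ℝ => exp (-t) * (t - u) ^ m / m.factorial) := by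
        continuity
      have hint : Integrable ((Icc 0 t).indicator
          (fun u => exp (-t) * (t - u) ^ m / m.factorial)) := by
        rw [integrable_indicator_iff measurableSet_Icc]
        exact hcont.integrableOn_Icc
      have hnn : 0 ≤ᵐ[volume] ((Icc 0 t).indicator
          (fun u => exp (-t) * (t - u) ^ m / m.factorial)) := by
        apply ae_of_all
        intro u
        apply indicator_nonneg
        intro v hv
        have : 0 ≤ t - v := by linarith [hv.2]
        positivity
      rw [← ofReal_integral_eq_lintegral_ofReal hint hnn]
      rw [integral_indicator measurableSet_Icc, integral_Icc_eq_integral_Ioc,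
        ← intervalIntegral.integral_of_le ht, integral_aux ht]
      simp [Gv, ht]
    · have : (Icc 0 t) = (∅ : Set ℝ) := Icc_eq_empty (by linarith)
      rw [this]
      simp [Gv, ht]

lemma Pn_K : ∀ (m : ℕ) {s t : ℝ}, 0 ≤ s → s ≤ t →
    Pn (m + 1) {x | s < x 0 ∧ T m x ≤ t ∧ t < T (m + 1) x}
      = ENNReal.ofReal (exp (-t) * (t - s) ^ m / m.factorial) := by
  intro m
  induction m with
  | zero =>
    intro s t hs hst
    have ht : 0 ≤ t := hs.trans hst
    have hB : MeasurableSet {p : ℝ × (Fin 0 → ℝ) | s < p.1 ∧ 0 ≤ t ∧ t < p.1} := by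
      apply MeasurableSet.inter (measurableSet_lt measurable_const measurable_fst)
      exact MeasurableSet.inter (MeasurableSet.const _)
        (measurableSet_lt measurable_const measurable_fst)
    have hset : {x : Fin 1 → ℝ | s < x 0 ∧ T 0 x ≤ t ∧ t < T 1 x}
        = {x : Fin 1 → ℝ | (x 0, Fin.tail x) ∈
            {p : ℝ × (Fin 0 → ℝ) | s < p.1 ∧ 0 ≤ t ∧ t < p.1}} := by
      ext x; simp [T_one]
    rw [hset, Pn_succ_eq 0 hB]
    simp only [Set.mem_setOf_eq]
    have hpt : (fun u => Pn 0 {y : Fin 0 → ℝ | s < u ∧ 0 ≤ t ∧ t < u})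
        = fun u => (Ioi t).indicator 1 u := by
      funext u
      by_cases hu : t < u
      · have : {y : Fin 0 → ℝ | s < u ∧ 0 ≤ t ∧ t < u} = univ := by
          ext y; simp [hu, ht, lt_of_le_of_lt hst hu]
        simp [this, indicator_of_mem (show u ∈ Ioi t from hu)]
      · have : {y : Fin 0 → ℝ | s < u ∧ 0 ≤ t ∧ t < u} = ∅ := by
          ext y; simp [hu]
        simp [this, indicator_of_notMem (show u ∉ Ioi t from hu)]
    rw [hpt, lintegral_indicator_one measurableSet_Ioi, nu_Ioi ht]
    simp
  | succ m _ =>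
    intro s t hs hst
    have hB : MeasurableSet {p : ℝ × (Fin (m+1) → ℝ) |
        s < p.1 ∧ p.1 + T m p.2 ≤ t ∧ t < p.1 + T (m+1) p.2} := by
      apply MeasurableSet.inter (measurableSet_lt measurable_const measurable_fst)
      apply MeasurableSet.inter
      · exact measurableSet_le (measurable_fst.add (measurable_T.comp measurable_snd))
          measurable_const
      · exact measurableSet_lt measurable_const
          (measurable_fst.add (measurable_T.comp measurable_snd))
    have hset : {x : Fin (m+2) → ℝ | s < x 0 ∧ T (m+1) x ≤ t ∧ t < T (m+2) x}
        = {x : Fin (m+2) → ℝ | (x 0, Fin.tail x) ∈ {p : ℝ × (Fin (m+1) → ℝ) |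
            s < p.1 ∧ p.1 + T m p.2 ≤ t ∧ t < p.1 + T (m+1) p.2}} := by
      ext x
      simp only [mem_setOf_eq, T_succ_tail]
    rw [hset, Pn_succ_eq (m+1) hB]
    simp only [Set.mem_setOf_eq]
    have hin : ∀ u : ℝ, Pn (m+1) {y : Fin (m+1) → ℝ |
        s < u ∧ u + T m y ≤ t ∧ t < u + T (m+1) y}
        = (if s < u then ENNReal.ofReal (Gv m (t - u)) else 0) := by
      intro u
      by_cases hu : s < u
      · rw [if_pos hu]
        have : {y : Fin (m+1) → ℝ | s < u ∧ u + T m y ≤ t ∧ t < u + T (m+1) y}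
            = {y : Fin (m+1) → ℝ | T m y ≤ t - u ∧ t - u < T (m+1) y} := by
          ext y
          constructor
          · rintro ⟨_, h1, h2⟩; constructor <;> linarith
          · rintro ⟨h1, h2⟩; exact ⟨hu, by linarith, by linarith⟩
        rw [this, Pn_gamma]
      · rw [if_neg hu]
        have : {y : Fin (m+1) → ℝ | s < u ∧ u + T m y ≤ t ∧ t < u + T (m+1) y} = ∅ := by
          ext y; simp [hu]
        simp [this]
    simp only [hin]
    have hmeas2 : Measurable fun u => (if s < u then ENNReal.ofReal (Gv m (t - u)) else 0) := by
      apply Measurable.ite measurableSet_Ioi _ measurable_const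
      exact ((measurable_Gv m).comp (measurable_const.sub measurable_id)).ennreal_ofReal
    rw [nu_lintegral hmeas2]
    have hcomb : (fun u => exponentialPDF 1 u *
          (if s < u then ENNReal.ofReal (Gv m (t - u)) else 0))
        = fun u => ENNReal.ofReal
            ((Ioc s t).indicator (fun u => exp (-t) * (t - u) ^ m / m.factorial) u) := by
      funext u
      rw [exponentialPDF_one]
      by_cases hu : s < u
      · rw [if_pos hu, ← ENNReal.ofReal_mul (by positivity)]
        congr 1
        have h0u : 0 ≤ u := le_of_lt (lt_of_le_of_lt hs hu)
        by_cases htu : 0 ≤ t - u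
        · rw [if_pos h0u, Gv, if_pos htu,
            indicator_of_mem (show u ∈ Ioc s t from ⟨hu, by linarith⟩)]
          rw [show -t = -u + -(t - u) by ring, Real.exp_add]
          ring
        · rw [Gv, if_neg htu, indicator_of_notMem (show u ∉ Ioc s t by
            intro hmem; exact htu (by linarith [hmem.2]))]
          simp
      · rw [if_neg hu, indicator_of_notMem (show u ∉ Ioc s t by
          intro hmem; exact hu hmem.1)]
        simp
    rw [hcomb]
    have hcont : Continuous (fun u : ℝ => exp (-t) * (t - u) ^ m / m.factorial) := by
      continuity
    have hint : Integrable ((Ioc s t).indicator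
        (fun u => exp (-t) * (t - u) ^ m / m.factorial)) := by
      rw [integrable_indicator_iff measurableSet_Ioc]
      exact hcont.integrableOn_Ioc
    have hnn : 0 ≤ᵐ[volume] ((Ioc s t).indicator
        (fun u => exp (-t) * (t - u) ^ m / m.factorial)) := by
      apply ae_of_all
      intro u
      apply indicator_nonneg
      intro v hv
      have : 0 ≤ t - v := by linarith [hv.2]
      positivity
    rw [← ofReal_integral_eq_lintegral_ofReal hint hnn]
    rw [integral_indicator measurableSet_Ioc, ← intervalIntegral.integral_of_le hst,
      integral_aux hst]

lemma Pn_eval0 (c : ℕ) (s : ℝ) : Pn (c + 1) {w : Fin (c+1) → ℝ | s < w 0} = nu (Ioi s) := by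
  have hB : MeasurableSet {p : ℝ × (Fin c → ℝ) | s < p.1} :=
    measurableSet_lt measurable_const measurable_fst
  have hset : {w : Fin (c+1) → ℝ | s < w 0}
      = {x : Fin (c+1) → ℝ | (x 0, Fin.tail x) ∈ {p : ℝ × (Fin c → ℝ) | s < p.1}} := by
    ext x; simp
  rw [hset, Pn_succ_eq c hB]
  simp only [Set.mem_setOf_eq]
  have hpt : (fun u => Pn c {y : Fin c → ℝ | s < u}) = fun u => (Ioi s).indicator 1 u := by
    funext u
    by_cases hu : s < u
    · have : {y : Fin c → ℝ | s < u} = univ := by ext y; simp [hu]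
      simp [this, indicator_of_mem (show u ∈ Ioi s from hu)]
    · have : {y : Fin c → ℝ | s < u} = ∅ := by ext y; simp [hu]
      simp [this, indicator_of_notMem (show u ∉ Ioi s from hu)]
  rw [hpt, lintegral_indicator_one measurableSet_Ioi]

section OmegaLevel

variable {Ω : Type*} [MeasurableSpace Ω] {μ : Measure Ω} [IsProbabilityMeasure μ]
  {Z : ℕ → Ω → ℝ}

/-- partial sums of the sequence -/
def Sp (Z : ℕ → Ω → ℝ) (m : ℕ) (ω : Ω) : ℝ := ∑ q ∈ Finset.range m, Z q ω

lemma measurable_Sp (hmeas : ∀ i, Measurable (Z i)) (m : ℕ) : Measurable (Sp Z m) :=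
  Finset.measurable_sum _ fun i _ => hmeas i

lemma map_V (hmeas : ∀ i, Measurable (Z i))
    (hlaw : ∀ i, Measure.map (Z i) μ = expMeasure 1)
    (hindep : iIndepFun Z μ)
    {n : ℕ} (g : Fin n → ℕ) (hg : Function.Injective g) :
    Measure.map (fun ω (j : Fin n) => Z (g j) ω) μ = Pn n := by
  classical
  suffices h : Measure.map (fun ω (j : Fin n) => Z (g j) ω) μ = Measure.pi (fun _ : Fin n => nu) by
    exact h
  refine (Measure.pi_eq (μ := fun _ : Fin n => nu) fun s hs => ?_).symm
  have hVmeas : Measurable (fun ω (j : Fin n) => Z (g j) ω) :=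
    measurable_pi_lambda _ fun j => hmeas (g j)
  rw [Measure.map_apply hVmeas (MeasurableSet.univ_pi hs)]
  set sets : ℕ → Set ℝ := fun i => if h : ∃ j, g j = i then s (h.choose) else univ with hsets
  have hsets_g : ∀ j : Fin n, sets (g j) = s j := by
    intro j
    have h : ∃ j', g j' = g j := ⟨j, rfl⟩
    simp only [hsets, dif_pos h]
    exact congrArg s (hg h.choose_spec)
  have hpre : (fun ω (j : Fin n) => Z (g j) ω) ⁻¹' (univ.pi s)
      = ⋂ i ∈ Finset.image g Finset.univ, Z i ⁻¹' (sets i) := by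
    ext ω
    simp only [mem_preimage, Set.mem_pi, mem_univ, forall_true_left, Set.mem_iInter,
      Finset.mem_image, Finset.mem_univ, true_and, mem_setOf_eq]
    constructor
    · rintro h i ⟨j, rfl⟩
      rw [hsets_g j]; exact h j
    · intro h j
      rw [← hsets_g j]; exact h (g j) ⟨j, rfl⟩
  have hms : ∀ i ∈ Finset.image g Finset.univ, MeasurableSet (sets i) := by
    intro i hi
    rcases Finset.mem_image.mp hi with ⟨j, _, rfl⟩
    rw [hsets_g j]; exact hs j
  rw [hpre, hindep.measure_inter_preimage_eq_mul _ hms,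
    Finset.prod_image (fun j _ j' _ h => hg h)]
  refine Finset.prod_congr rfl fun j _ => ?_
  rw [hsets_g j, ← Measure.map_apply (hmeas (g j)) (hs j), hlaw (g j)]
  rfl

lemma map_pair (hmeas : ∀ i, Measurable (Z i))
    (hlaw : ∀ i, Measure.map (Z i) μ = expMeasure 1)
    (hindep : iIndepFun Z μ)
    (p c : ℕ) :
    Measure.map (fun ω => ((fun j : Fin p => Z (j : ℕ) ω), (fun j : Fin c => Z (p + (j : ℕ)) ω))) μ
      = (Pn p).prod (Pn c) := by
  have hV : Measurable (fun ω (j : Fin p) => Z (j : ℕ) ω) :=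
    measurable_pi_lambda _ fun j => hmeas _
  have hW : Measurable (fun ω (j : Fin c) => Z (p + (j : ℕ)) ω) :=
    measurable_pi_lambda _ fun j => hmeas _
  have hdisj : Disjoint (Finset.range p) (Finset.Ico p (p + c)) := by
    simp only [Finset.disjoint_left, Finset.mem_range, Finset.mem_Ico]
    intro x hx
    omega
  have h0 := hindep.indepFun_finset (Finset.range p) (Finset.Ico p (p + c)) hdisj hmeas
  have hφ : Measurable (fun v : ((i : Finset.range p) → ℝ) =>fun j : Fin p =>
      v ⟨(j : ℕ), Finset.mem_range.mpr j.isLt⟩) :=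
    measurable_pi_lambda _ fun j => measurable_pi_apply _
  have hψ : Measurable (fun v : ((i : Finset.Ico p (p + c)) → ℝ) => fun j : Fin c =>
      v ⟨p + (j : ℕ), Finset.mem_Ico.mpr ⟨Nat.le_add_right _ _, by omega⟩⟩) :=
    measurable_pi_lambda _ fun j => measurable_pi_apply _
  have hIndep : IndepFun (fun ω (j : Fin p) => Z (j : ℕ) ω)
      (fun ω (j : Fin c) => Z (p + (j : ℕ)) ω) μ := h0.comp hφ hψ
  rw [(indepFun_iff_map_prod_eq_prod_map_map hV.aemeasurable hW.aemeasurable).mp hIndep,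
    map_V hmeas hlaw hindep (fun j : Fin p => (j : ℕ)) Fin.val_injective,
    map_V hmeas hlaw hindep (fun j : Fin c => p + (j : ℕ))
      (fun j j' h => Fin.val_injective (Nat.add_left_cancel h))]

lemma step (hmeas : ∀ i, Measurable (Z i))
    (hlaw : ∀ i, Measure.map (Z i) μ = expMeasure 1)
    (hindep : iIndepFun Z μ)
    (p c : ℕ) {a b : ℝ} (ha : 0 ≤ a) (hab : a ≤ b)
    {A : Set (Fin p → ℝ)} (hA : MeasurableSet A) :
    μ ({ω | (fun j : Fin p => Z (j : ℕ) ω) ∈ A} ∩ {ω | Sp Z p ω ≤ a ∧ a < Sp Z (p + 1) ω}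
        ∩ {ω | Sp Z (p + c) ω ≤ b ∧ b < Sp Z (p + c + 1) ω})
      = μ ({ω | (fun j : Fin p => Z (j : ℕ) ω) ∈ A} ∩ {ω | Sp Z p ω ≤ a ∧ a < Sp Z (p + 1) ω})
        * ENNReal.ofReal (exp (-(b - a)) * (b - a) ^ c / c.factorial) := by
  classical
  have hSpV : ∀ ω, Sp Z p ω = T p (fun j : Fin p => Z (j : ℕ) ω) :=
    fun ω => (T_eq_sum_range le_rfl fun q => Z q ω).symm
  have hSpW : ∀ (m : ℕ), m ≤ c + 1 → ∀ ω, Sp Z (p + m) ω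
      = T p (fun j : Fin p => Z (j : ℕ) ω) + T m (fun j : Fin (c+1) => Z (p + (j : ℕ)) ω) := by
    intro m hm ω
    rw [Sp, Finset.sum_range_add, ← hSpV ω, T_eq_sum_range hm (fun q => Z (p + q) ω)]
    rfl
  set D1 : Set ((Fin p → ℝ) × (Fin (c+1) → ℝ)) :=
    {vw | vw.1 ∈ A ∧ T p vw.1 ≤ a ∧ a - T p vw.1 < vw.2 0} with hD1def
  set D2 : Set ((Fin p → ℝ) × (Fin (c+1) → ℝ)) :=
    {vw | vw.1 ∈ A ∧ T p vw.1 ≤ a ∧ a - T p vw.1 < vw.2 0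
      ∧ T c vw.2 ≤ b - T p vw.1 ∧ b - T p vw.1 < T (c+1) vw.2} with hD2def
  have hTm1 : Measurable fun vw : (Fin p → ℝ) × (Fin (c+1) → ℝ) => T p vw.1 :=
    measurable_T.comp measurable_fst
  have hw0 : Measurable fun vw : (Fin p → ℝ) × (Fin (c+1) → ℝ) => vw.2 0 :=
    (measurable_pi_apply _).comp measurable_snd
  have hD1 : MeasurableSet D1 := by
    apply MeasurableSet.inter (measurable_fst hA)
    exact MeasurableSet.inter (measurableSet_le hTm1 measurable_const)
      (measurableSet_lt ((measurable_const.sub hTm1)) hw0)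
  have hD2 : MeasurableSet D2 := by
    apply MeasurableSet.inter (measurable_fst hA)
    apply MeasurableSet.inter (measurableSet_le hTm1 measurable_const)
    apply MeasurableSet.inter (measurableSet_lt ((measurable_const.sub hTm1)) hw0)
    apply MeasurableSet.inter
    · exact measurableSet_le (measurable_T.comp measurable_snd) (measurable_const.sub hTm1)
    · exact measurableSet_lt (measurable_const.sub hTm1) (measurable_T.comp measurable_snd)
  have hpair : Measurable fun ω =>
      ((fun j : Fin p => Z (j : ℕ) ω), (fun j : Fin (c+1) => Z (p + (j : ℕ)) ω)) :=
    (measurable_pi_lambda _ fun j => hmeas _).prodMk (measurable_pi_lambda _ fun j => hmeas _)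
  have hE1 : ({ω | (fun j : Fin p => Z (j : ℕ) ω) ∈ A} ∩ {ω | Sp Z p ω ≤ a ∧ a < Sp Z (p + 1) ω})
      = (fun ω => ((fun j : Fin p => Z (j : ℕ) ω), (fun j : Fin (c+1) => Z (p + (j : ℕ)) ω)))
        ⁻¹' D1 := by
    ext ω
    simp only [mem_inter_iff, mem_setOf_eq, mem_preimage, hD1def]
    rw [hSpV ω, hSpW 1 (by omega) ω, T_one]
    constructor
    · rintro ⟨h1, h2, h3⟩; exact ⟨h1, h2, by linarith⟩
    · rintro ⟨h1, h2, h3⟩; exact ⟨h1, h2, by linarith⟩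
  have hE2 : ({ω | (fun j : Fin p => Z (j : ℕ) ω) ∈ A} ∩ {ω | Sp Z p ω ≤ a ∧ a < Sp Z (p + 1) ω}
        ∩ {ω | Sp Z (p + c) ω ≤ b ∧ b < Sp Z (p + c + 1) ω})
      = (fun ω => ((fun j : Fin p => Z (j : ℕ) ω), (fun j : Fin (c+1) => Z (p + (j : ℕ)) ω)))
        ⁻¹' D2 := by
    ext ω
    simp only [mem_inter_iff, mem_setOf_eq, mem_preimage, hD2def]
    rw [Nat.add_assoc p c 1]
    rw [hSpV ω, hSpW 1 (by omega) ω, hSpW c (by omega) ω, hSpW (c+1) le_rfl ω, T_one]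
    constructor
    · rintro ⟨⟨h1, h2, h3⟩, h4, h5⟩
      exact ⟨h1, h2, by linarith, by linarith, by linarith⟩
    · rintro ⟨h1, h2, h3, h4, h5⟩
      exact ⟨⟨h1, h2, by linarith⟩, by linarith, by linarith⟩
  have hmap := map_pair hmeas hlaw hindep p (c + 1)
  rw [hE2, ← Measure.map_apply hpair hD2, hmap, Measure.prod_apply hD2]
  rw [hE1, ← Measure.map_apply hpair hD1, hmap, Measure.prod_apply hD1]
  have hf1meas : Measurable fun v : Fin p → ℝ => Pn (c+1) (Prod.mk v ⁻¹' D1) :=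
    measurable_measure_prodMk_left hD1
  rw [← lintegral_mul_const _ hf1meas]
  refine lintegral_congr fun v => ?_
  by_cases hv : v ∈ A ∧ T p v ≤ a
  · have hsect2 : Prod.mk v ⁻¹' D2
        = {w : Fin (c+1) → ℝ | a - T p v < w 0
            ∧ T c w ≤ b - T p v ∧ b - T p v < T (c+1) w} := by
      ext w
      simp only [mem_preimage, hD2def, mem_setOf_eq, hv.1, hv.2, true_and]
    have hsect1 : Prod.mk v ⁻¹' D1 = {w : Fin (c+1) → ℝ | a - T p v < w 0} := by
      ext w
      simp only [mem_preimage, hD1def, mem_setOf_eq, hv.1, hv.2, true_and]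
    rw [hsect2, hsect1, Pn_K c (by linarith [hv.2]) (by linarith), Pn_eval0 c,
      nu_Ioi (by linarith [hv.2])]
    rw [show b - T p v - (a - T p v) = b - a by ring, ← ENNReal.ofReal_mul (by positivity)]
    congr 1
    rw [show -(b - T p v) = -(a - T p v) + -(b - a) by ring, Real.exp_add]
    ring
  · have hsect2 : Prod.mk v ⁻¹' D2 = ∅ := by
      ext w
      simp only [mem_preimage, hD2def, mem_setOf_eq, mem_empty_iff_false, iff_false]
      intro h
      exact hv ⟨h.1, h.2.1⟩
    have hsect1 : Prod.mk v ⁻¹' D1 = ∅ := by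
      ext w
      simp only [mem_preimage, hD1def, mem_setOf_eq, mem_empty_iff_false, iff_false]
      intro h
      exact hv ⟨h.1, h.2.1⟩
    rw [hsect2, hsect1]
    simp

lemma find_r {k : ℕ → ℕ} (hk0 : k 0 = 1) (hkmono : StrictMono k) {L q : ℕ} (hq2 : 2 ≤ q)
    (hqk : q ≤ k L) : ∃ r, r < L ∧ k r < q ∧ q ≤ k (r + 1) := by
  classical
  set r := Nat.findGreatest (fun r => k r < q) L with hrdef
  have hP0 : k 0 < q := by omega
  have hr : k r < q := by
    have := Nat.findGreatest_spec (P := fun r => k r < q) (Nat.zero_le L) hP0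
    rwa [← hrdef] at this
  have hrL : r < L := hkmono.lt_iff_lt.mp (lt_of_lt_of_le hr hqk)
  refine ⟨r, hrL, hr, ?_⟩
  by_contra h
  push_neg at h
  have h2 := Nat.le_findGreatest (P := fun r => k r < q) (show r + 1 ≤ L by omega) h
  rw [← hrdef] at h2
  omega

lemma w_nonneg {k : ℕ → ℕ} (hk0 : k 0 = 1) (hkmono : StrictMono k)
    {z : ℕ → ℝ} (hz0 : z 0 = 0) (hzmono : StrictMono z)
    {w : ℕ → ℕ → ℝ} (hw0 : w 0 1 = 1)
    (hw1 : ∀ ℓ : ℕ, 1 ≤ ℓ → w ℓ 1 = 1)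
    (hwrec : ∀ ℓ : ℕ, 1 ≤ ℓ → ∀ r : ℕ, r < ℓ → ∀ q : ℕ, k r < q → q ≤ k (r + 1) →
      w ℓ q = ∑ i ∈ Finset.Icc 1 (k r),
        w r i * (z ℓ - z r) ^ (q - i) / (Nat.factorial (q - i))) :
    ∀ ℓ q, 1 ≤ q → q ≤ k ℓ → 0 ≤ w ℓ q := by
  intro L
  induction L using Nat.strong_induction_on with
  | _ L ih =>
    intro q hq1 hqk
    rcases eq_or_lt_of_le hq1 with hq | hq2
    · rcases Nat.eq_zero_or_pos L with hL | hL
      · rw [hL, ← hq, hw0]; norm_num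
      · rw [← hq, hw1 L hL]; norm_num
    · have hq2' : 2 ≤ q := hq2
      obtain ⟨r, hrL, hkr, hqk1⟩ := find_r hk0 hkmono hq2' hqk
      have hL1 : 1 ≤ L := by omega
      rw [hwrec L hL1 r hrL q hkr hqk1]
      refine Finset.sum_nonneg fun i hi => ?_
      rw [Finset.mem_Icc] at hi
      have hwi : 0 ≤ w r i := ih r hrL i hi.1 hi.2
      have hzz : 0 ≤ z L - z r := by
        have := hzmono.le_iff_le.mpr (le_of_lt hrL)
        linarith
      have : (0:ℝ) ≤ ((q - i).factorial : ℝ) := Nat.cast_nonneg _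
      positivity

/-- set of sample points where all the variables are positive -/
def Om0 {Ω : Type*} (Z : ℕ → Ω → ℝ) : Set Ω := {ω | ∀ i, 0 < Z i ω}

lemma measurableSet_Om0 (hmeas : ∀ i, Measurable (Z i)) : MeasurableSet (Om0 Z) := by
  have : Om0 Z = ⋂ i, {ω | 0 < Z i ω} := by ext ω; simp [Om0]
  rw [this]
  exact MeasurableSet.iInter fun i => measurableSet_lt measurable_const (hmeas i)

lemma mu_Om0_compl (hmeas : ∀ i, Measurable (Z i))
    (hlaw : ∀ i, Measure.map (Z i) μ = expMeasure 1) : μ (Om0 Z)ᶜ = 0 := by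
  have hsub : (Om0 Z)ᶜ ⊆ ⋃ i, Z i ⁻¹' (Iic 0) := by
    intro ω hω
    simp only [Om0, mem_compl_iff, mem_setOf_eq, not_forall, not_lt] at hω
    obtain ⟨i, hi⟩ := hω
    exact mem_iUnion.mpr ⟨i, hi⟩
  refine measure_mono_null hsub (measure_iUnion_null fun i => ?_)
  rw [← Measure.map_apply (hmeas i) measurableSet_Iic, hlaw i]
  exact nu_Iic_zero

lemma inter_Om0 (h0 : μ (Om0 Z)ᶜ = 0) (X : Set Ω) : μ (Om0 Z ∩ X) = μ X := by
  apply le_antisymm (measure_mono inter_subset_right)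
  calc μ X ≤ μ (Om0 Z ∩ X ∪ (Om0 Z)ᶜ) := by
        refine measure_mono fun ω hω => ?_
        by_cases h : ω ∈ Om0 Z
        · exact Or.inl ⟨h, hω⟩
        · exact Or.inr h
    _ ≤ μ (Om0 Z ∩ X) + μ ((Om0 Z)ᶜ) := measure_union_le _ _
    _ = μ (Om0 Z ∩ X) := by rw [h0, add_zero]

lemma Sp_zero (ω : Ω) : Sp Z 0 ω = 0 := by simp [Sp]

lemma Sp_lt_Sp {ω : Ω} (hω : ω ∈ Om0 Z) {m m' : ℕ} (h : m < m') : Sp Z m ω < Sp Z m' ω := by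
  have key : Sp Z m' ω = Sp Z m ω + ∑ x ∈ Finset.range (m' - m), Z (m + x) ω := by
    have h2 : m + (m' - m) = m' := by omega
    calc Sp Z m' ω = ∑ x ∈ Finset.range (m + (m' - m)), Z x ω := by rw [h2]; rfl
    _ = Sp Z m ω + ∑ x ∈ Finset.range (m' - m), Z (m + x) ω := Finset.sum_range_add _ _ _
  rw [key]
  have hpos : 0 < ∑ x ∈ Finset.range (m' - m), Z (m + x) ω :=
    Finset.sum_pos (fun i _ => hω _) (by simp; omega)
  linarith

lemma Sp_le_Sp {ω : Ω} (hω : ω ∈ Om0 Z) {m m' : ℕ} (h : m ≤ m') : Sp Z m ω ≤ Sp Z m' ω := by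
  rcases eq_or_lt_of_le h with rfl | h'
  · exact le_rfl
  · exact le_of_lt (Sp_lt_Sp hω h')

lemma Sp_pos {ω : Ω} (hω : ω ∈ Om0 Z) {m : ℕ} (h : 1 ≤ m) : 0 < Sp Z m ω := by
  have := Sp_lt_Sp hω (show 0 < m from h)
  rwa [Sp_zero] at this

lemma partition (h0 : μ (Om0 Z)ᶜ = 0) {N : ℕ} (hN : 1 ≤ N) {t : ℝ} (ht : 0 ≤ t)
    (X : Set Ω) (hX : MeasurableSet X) (hmeas : ∀ i, Measurable (Z i)) :
    μ (X ∩ {ω | t < Sp Z N ω})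
      = ∑ i ∈ Finset.range N, μ (X ∩ {ω | Sp Z i ω ≤ t ∧ t < Sp Z (i + 1) ω}) := by
  classical
  have hmeasSp : ∀ m, Measurable (Sp Z m) := measurable_Sp hmeas
  rw [← inter_Om0 h0]
  have hsets : Om0 Z ∩ (X ∩ {ω | t < Sp Z N ω})
      = ⋃ i ∈ Finset.range N, (Om0 Z ∩ (X ∩ {ω | Sp Z i ω ≤ t ∧ t < Sp Z (i + 1) ω})) := by
    ext ω
    simp only [mem_inter_iff, mem_setOf_eq, mem_iUnion, Finset.mem_range, exists_prop]
    constructor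
    · rintro ⟨hΩ, hXω, hSp⟩
      have hex : ∃ i, t < Sp Z i ω := ⟨N, hSp⟩
      set i0 := Nat.find hex with hi0
      have hspec : t < Sp Z i0 ω := Nat.find_spec hex
      have hle : i0 ≤ N := Nat.find_le hSp
      have h1 : 1 ≤ i0 := by
        rcases Nat.eq_zero_or_pos i0 with h | h
        · rw [h, Sp_zero] at hspec; linarith
        · exact h
      have hprev : Sp Z (i0 - 1) ω ≤ t := by
        have := Nat.find_min hex (show i0 - 1 < i0 by omega)
        simpa using not_lt.mp this
      refine ⟨i0 - 1, by omega, hΩ, hXω, hprev, ?_⟩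
      rw [show i0 - 1 + 1 = i0 from by omega]
      exact hspec
    · rintro ⟨i, hiN, hΩ, hXω, _, hSp⟩
      exact ⟨hΩ, hXω, lt_of_lt_of_le hSp (Sp_le_Sp hΩ (by omega))⟩
  rw [hsets, measure_biUnion_finset ?hd fun i _ => ?hm]
  case hd =>
    intro i hi i' hi' hne
    simp only [Finset.coe_range, mem_Iio] at hi hi'
    have key : ∀ a a' : ℕ, a < a' →
        Disjoint (Om0 Z ∩ (X ∩ {ω | Sp Z a ω ≤ t ∧ t < Sp Z (a + 1) ω}))
          (Om0 Z ∩ (X ∩ {ω | Sp Z a' ω ≤ t ∧ t < Sp Z (a' + 1) ω})) := by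
      intro a a' haa
      rw [Set.disjoint_left]
      rintro ω ⟨hΩ, _, _, hlt⟩ ⟨_, _, hle', _⟩
      have : Sp Z (a + 1) ω ≤ Sp Z a' ω := Sp_le_Sp hΩ (by omega)
      linarith
    rcases lt_or_gt_of_ne hne with h | h
    · exact key _ _ h
    · exact (key _ _ h).symm
  case hm =>
    exact (measurableSet_Om0 hmeas).inter (hX.inter
      ((measurableSet_le (hmeasSp _) measurable_const).inter
        (measurableSet_lt measurable_const (hmeasSp _))))
  exact Finset.sum_congr rfl fun i _ => inter_Om0 h0 _

end OmegaLevel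

section Main

variable {Ω : Type*} [MeasurableSpace Ω] {μ : Measure Ω} [IsProbabilityMeasure μ]
  {Z : ℕ → Ω → ℝ}

lemma sum_Icc_one {M : Type*} [AddCommMonoid M] (n : ℕ) (f : ℕ → M) :
    ∑ i ∈ Finset.Icc 1 n, f i = ∑ i ∈ Finset.range n, f (i + 1) := by
  have h : Finset.Icc 1 n = Finset.Ico 1 (n + 1) := by
    ext x; simp [Nat.lt_succ_iff]
  rw [h, Finset.sum_Ico_eq_sum_range]
  simp only [Nat.add_sub_cancel]
  exact Finset.sum_congr rfl fun i _ => by rw [Nat.add_comm]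

lemma measurableSet_Fev (hmeas : ∀ i, Measurable (Z i)) (k : ℕ → ℕ) (z : ℕ → ℝ) (r : ℕ) :
    MeasurableSet {ω | ∀ j ∈ Finset.Icc 1 r, z j < Sp Z (k j) ω} := by
  have : {ω | ∀ j ∈ Finset.Icc 1 r, z j < Sp Z (k j) ω}
      = ⋂ j, ⋂ (_ : j ∈ Finset.Icc 1 r), {ω | z j < Sp Z (k j) ω} := by
    ext ω; simp
  rw [this]
  exact MeasurableSet.iInter fun j => MeasurableSet.iInter fun _ =>
    measurableSet_lt measurable_const (measurable_Sp hmeas _)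

lemma measurableSet_Cev (hmeas : ∀ i, Measurable (Z i)) (m m' : ℕ) (t : ℝ) :
    MeasurableSet {ω | Sp Z m ω ≤ t ∧ t < Sp Z m' ω} :=
  (measurableSet_le (measurable_Sp hmeas _) measurable_const).inter
    (measurableSet_lt measurable_const (measurable_Sp hmeas _))

lemma crux
    (hmeas : ∀ i, Measurable (Z i))
    (hlaw : ∀ i, Measure.map (Z i) μ = expMeasure 1)
    (hindep : iIndepFun Z μ)
    {k : ℕ → ℕ} (hk0 : k 0 = 1) (hkmono : StrictMono k)
    {z : ℕ → ℝ} (hz0 : z 0 = 0) (hzmono : StrictMono z)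
    {w : ℕ → ℕ → ℝ} (hw0 : w 0 1 = 1)
    (hw1 : ∀ ℓ : ℕ, 1 ≤ ℓ → w ℓ 1 = 1)
    (hwrec : ∀ ℓ : ℕ, 1 ≤ ℓ → ∀ r : ℕ, r < ℓ → ∀ q : ℕ, k r < q → q ≤ k (r + 1) →
      w ℓ q = ∑ i ∈ Finset.Icc 1 (k r),
        w r i * (z ℓ - z r) ^ (q - i) / (Nat.factorial (q - i))) :
    ∀ L q', q' + 1 ≤ k L →
      μ ({ω | ∀ j ∈ Finset.Icc 1 (L - 1), z j < Sp Z (k j) ω}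
          ∩ {ω | Sp Z q' ω ≤ z L ∧ z L < Sp Z (q' + 1) ω})
        = ENNReal.ofReal (exp (-(z L)) * w L (q' + 1)) := by
  classical
  have h0 : μ (Om0 Z)ᶜ = 0 := mu_Om0_compl hmeas hlaw
  have hz_nonneg : ∀ r, 0 ≤ z r := by
    intro r
    have := hzmono.monotone (Nat.zero_le r)
    rw [hz0] at this
    exact this
  intro L
  induction L using Nat.strong_induction_on with
  | _ L ih =>
    intro q' hqk
    rcases Nat.eq_zero_or_pos q' with rfl | hq'pos
    · -- base case q = 1
      have hSE : Om0 Z ∩ ({ω | ∀ j ∈ Finset.Icc 1 (L - 1), z j < Sp Z (k j) ω}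
            ∩ {ω | Sp Z 0 ω ≤ z L ∧ z L < Sp Z (0 + 1) ω})
          = Om0 Z ∩ {ω | z L < Sp Z 1 ω} := by
        ext ω
        simp only [mem_inter_iff, mem_setOf_eq, Nat.zero_add]
        constructor
        · rintro ⟨hΩ, _, _, h2⟩
          exact ⟨hΩ, h2⟩
        · rintro ⟨hΩ, h1⟩
          refine ⟨hΩ, fun j hj => ?_, by rw [Sp_zero]; exact hz_nonneg L, h1⟩
          rw [Finset.mem_Icc] at hj
          have hzj : z j < z L := hzmono (by omega)
          have hkj : (1:ℕ) ≤ k j := by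
            have := hkmono.monotone (Nat.zero_le j); omega
          have : Sp Z 1 ω ≤ Sp Z (k j) ω := Sp_le_Sp hΩ hkj
          linarith
      have hset1 : {ω | z L < Sp Z 1 ω} = Z 0 ⁻¹' (Ioi (z L)) := by
        ext ω
        simp [Sp, Finset.sum_range_one]
      have hw' : w L 1 = 1 := by
        rcases Nat.eq_zero_or_pos L with rfl | hL
        · exact hw0
        · exact hw1 L hL
      calc μ ({ω | ∀ j ∈ Finset.Icc 1 (L - 1), z j < Sp Z (k j) ω}
            ∩ {ω | Sp Z 0 ω ≤ z L ∧ z L < Sp Z (0 + 1) ω})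
          = μ (Om0 Z ∩ ({ω | ∀ j ∈ Finset.Icc 1 (L - 1), z j < Sp Z (k j) ω}
            ∩ {ω | Sp Z 0 ω ≤ z L ∧ z L < Sp Z (0 + 1) ω})) := (inter_Om0 h0 _).symm
        _ = μ (Om0 Z ∩ {ω | z L < Sp Z 1 ω}) := by rw [hSE]
        _ = μ {ω | z L < Sp Z 1 ω} := inter_Om0 h0 _
        _ = μ (Z 0 ⁻¹' (Ioi (z L))) := by rw [hset1]
        _ = nu (Ioi (z L)) := by
            rw [← Measure.map_apply (hmeas 0) measurableSet_Ioi, hlaw 0]; rfl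
        _ = ENNReal.ofReal (exp (-(z L))) := nu_Ioi (hz_nonneg L)
        _ = ENNReal.ofReal (exp (-(z L)) * w L (0 + 1)) := by
            rw [show (0:ℕ) + 1 = 1 from rfl, hw', mul_one]
    · -- inductive case q = q' + 1 ≥ 2
      obtain ⟨r, hrL, hkr, hqk1⟩ := find_r hk0 hkmono (by omega) hqk
      have hL1 : 1 ≤ L := by omega
      have hzr : 0 ≤ z r := hz_nonneg r
      have hzrL : z r ≤ z L := le_of_lt (hzmono hrL)
      have hkr1 : 1 ≤ k r := by
        have := hkmono.monotone (Nat.zero_le r); omega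
      have hF'meas := measurableSet_Fev (Z := Z) hmeas k z (r - 1)
      have hCqmeas := measurableSet_Cev (Z := Z) hmeas q' (q' + 1) (z L)
      have hSE1 : Om0 Z ∩ ({ω | ∀ j ∈ Finset.Icc 1 (L - 1), z j < Sp Z (k j) ω}
            ∩ {ω | Sp Z q' ω ≤ z L ∧ z L < Sp Z (q' + 1) ω})
          = Om0 Z ∩ (({ω | ∀ j ∈ Finset.Icc 1 (r - 1), z j < Sp Z (k j) ω}
            ∩ {ω | Sp Z q' ω ≤ z L ∧ z L < Sp Z (q' + 1) ω})
            ∩ {ω | z r < Sp Z (k r) ω}) := by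
        ext ω
        simp only [mem_inter_iff, mem_setOf_eq]
        constructor
        · rintro ⟨hΩ, hF, hCq1, hCq2⟩
          refine ⟨hΩ, ⟨⟨fun j hj => hF j ?_, hCq1, hCq2⟩, ?_⟩⟩
          · rw [Finset.mem_Icc] at hj ⊢; omega
          · rcases Nat.eq_zero_or_pos r with hr0 | hr0
            · subst hr0
              rw [hz0, hk0]
              exact Sp_pos hΩ le_rfl
            · exact hF r (Finset.mem_Icc.mpr ⟨hr0, by omega⟩)
        · rintro ⟨hΩ, ⟨⟨hF', hCq1, hCq2⟩, hkrω⟩⟩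
          refine ⟨hΩ, fun j hj => ?_, hCq1, hCq2⟩
          rw [Finset.mem_Icc] at hj
          rcases lt_trichotomy j r with h | h | h
          · exact hF' j (Finset.mem_Icc.mpr ⟨hj.1, by omega⟩)
          · subst h; exact hkrω
          · have hzj : z j < z L := hzmono (by omega)
            have hq'kj : q' + 1 ≤ k j := le_trans hqk1 (hkmono.monotone (by omega))
            have hSp : Sp Z (q' + 1) ω ≤ Sp Z (k j) ω := Sp_le_Sp hΩ hq'kj
            linarith
      calc μ ({ω | ∀ j ∈ Finset.Icc 1 (L - 1), z j < Sp Z (k j) ω}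
            ∩ {ω | Sp Z q' ω ≤ z L ∧ z L < Sp Z (q' + 1) ω})
          = μ (Om0 Z ∩ ({ω | ∀ j ∈ Finset.Icc 1 (L - 1), z j < Sp Z (k j) ω}
            ∩ {ω | Sp Z q' ω ≤ z L ∧ z L < Sp Z (q' + 1) ω})) := (inter_Om0 h0 _).symm
        _ = μ (Om0 Z ∩ (({ω | ∀ j ∈ Finset.Icc 1 (r - 1), z j < Sp Z (k j) ω}
            ∩ {ω | Sp Z q' ω ≤ z L ∧ z L < Sp Z (q' + 1) ω})
            ∩ {ω | z r < Sp Z (k r) ω})) := by rw [hSE1]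
        _ = μ (({ω | ∀ j ∈ Finset.Icc 1 (r - 1), z j < Sp Z (k j) ω}
            ∩ {ω | Sp Z q' ω ≤ z L ∧ z L < Sp Z (q' + 1) ω})
            ∩ {ω | z r < Sp Z (k r) ω}) := inter_Om0 h0 _
        _ = ∑ i ∈ Finset.range (k r), μ (({ω | ∀ j ∈ Finset.Icc 1 (r - 1), z j < Sp Z (k j) ω}
            ∩ {ω | Sp Z q' ω ≤ z L ∧ z L < Sp Z (q' + 1) ω})
            ∩ {ω | Sp Z i ω ≤ z r ∧ z r < Sp Z (i + 1) ω}) :=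
            partition h0 hkr1 hzr _ (hF'meas.inter hCqmeas) hmeas
        _ = ∑ i ∈ Finset.range (k r), ENNReal.ofReal (exp (-(z L))
            * (w r (i + 1) * (z L - z r) ^ (q' - i) / ↑(Nat.factorial (q' - i)))) := by
            refine Finset.sum_congr rfl fun i hi => ?_
            rw [Finset.mem_range] at hi
            have hik : i + 1 ≤ k r := hi
            have hiq : i < q' := by omega
            set Ai : Set (Fin i → ℝ) :=
              {v | ∀ j ∈ Finset.Icc 1 (r - 1), k j < i + 1 → z j < T (k j) v} with hAi
            have hAimeas : MeasurableSet Ai := by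
              have : Ai = ⋂ j, ⋂ (_ : j ∈ Finset.Icc 1 (r - 1)), ⋂ (_ : k j < i + 1),
                  {v : Fin i → ℝ | z j < T (k j) v} := by
                ext v; simp [hAi]
              rw [this]
              exact MeasurableSet.iInter fun j => MeasurableSet.iInter fun _ =>
                MeasurableSet.iInter fun _ => measurableSet_lt measurable_const measurable_T
            have hTB : ∀ (ω : Ω) (j : ℕ), k j ≤ i →
                T (k j) (fun jj : Fin i => Z (jj : ℕ) ω) = Sp Z (k j) ω :=
              fun ω j hj => T_eq_sum_range hj fun q => Z q ω
            have hBmem : ∀ ω : Ω, ((fun jj : Fin i => Z (jj : ℕ) ω) ∈ Ai)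
                ↔ ∀ j ∈ Finset.Icc 1 (r - 1), k j < i + 1 → z j < Sp Z (k j) ω := by
              intro ω
              simp only [hAi, mem_setOf_eq]
              constructor
              · intro h j hj hkj
                have h2 := h j hj hkj
                rwa [hTB ω j (by omega)] at h2
              · intro h j hj hkj
                rw [hTB ω j (by omega)]
                exact h j hj hkj
            have hstep := step hmeas hlaw hindep i (q' - i) hzr hzrL hAimeas
            rw [show i + (q' - i) = q' from by omega] at hstep
            have hSE2 : Om0 Z ∩ (({ω | ∀ j ∈ Finset.Icc 1 (r - 1), z j < Sp Z (k j) ω}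
                  ∩ {ω | Sp Z q' ω ≤ z L ∧ z L < Sp Z (q' + 1) ω})
                  ∩ {ω | Sp Z i ω ≤ z r ∧ z r < Sp Z (i + 1) ω})
                = Om0 Z ∩ ({ω | (fun jj : Fin i => Z (jj : ℕ) ω) ∈ Ai}
                  ∩ {ω | Sp Z i ω ≤ z r ∧ z r < Sp Z (i + 1) ω}
                  ∩ {ω | Sp Z q' ω ≤ z L ∧ z L < Sp Z (q' + 1) ω}) := by
              ext ω
              simp only [mem_inter_iff, mem_setOf_eq, hBmem ω]
              constructor
              · rintro ⟨hΩ, ⟨⟨hF, hCq⟩, hCev⟩⟩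
                exact ⟨hΩ, ⟨fun j hj _ => hF j hj, hCev⟩, hCq⟩
              · rintro ⟨hΩ, ⟨⟨hB, hCev⟩, hCq⟩⟩
                refine ⟨hΩ, ⟨⟨fun j hj => ?_, hCq⟩, hCev⟩⟩
                rcases lt_or_ge (k j) (i + 1) with h | h
                · exact hB j hj h
                · rw [Finset.mem_Icc] at hj
                  have hzj : z j < z r := hzmono (by omega)
                  have hSp : Sp Z (i + 1) ω ≤ Sp Z (k j) ω := Sp_le_Sp hΩ (by omega)
                  linarith [hCev.2]
            have hSE3 : Om0 Z ∩ ({ω | (fun jj : Fin i => Z (jj : ℕ) ω) ∈ Ai}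
                  ∩ {ω | Sp Z i ω ≤ z r ∧ z r < Sp Z (i + 1) ω})
                = Om0 Z ∩ ({ω | ∀ j ∈ Finset.Icc 1 (r - 1), z j < Sp Z (k j) ω}
                  ∩ {ω | Sp Z i ω ≤ z r ∧ z r < Sp Z (i + 1) ω}) := by
              ext ω
              simp only [mem_inter_iff, mem_setOf_eq, hBmem ω]
              constructor
              · rintro ⟨hΩ, hB, hCev⟩
                refine ⟨hΩ, fun j hj => ?_, hCev⟩
                rcases lt_or_ge (k j) (i + 1) with h | h
                · exact hB j hj h
                · rw [Finset.mem_Icc] at hj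
                  have hzj : z j < z r := hzmono (by omega)
                  have hSp : Sp Z (i + 1) ω ≤ Sp Z (k j) ω := Sp_le_Sp hΩ (by omega)
                  linarith [hCev.2]
              · rintro ⟨hΩ, hF, hCev⟩
                exact ⟨hΩ, fun j hj _ => hF j hj, hCev⟩
            have hzLr : 0 ≤ z L - z r := by linarith
            calc μ (({ω | ∀ j ∈ Finset.Icc 1 (r - 1), z j < Sp Z (k j) ω}
                  ∩ {ω | Sp Z q' ω ≤ z L ∧ z L < Sp Z (q' + 1) ω})
                  ∩ {ω | Sp Z i ω ≤ z r ∧ z r < Sp Z (i + 1) ω})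
                = μ (Om0 Z ∩ (({ω | ∀ j ∈ Finset.Icc 1 (r - 1), z j < Sp Z (k j) ω}
                  ∩ {ω | Sp Z q' ω ≤ z L ∧ z L < Sp Z (q' + 1) ω})
                  ∩ {ω | Sp Z i ω ≤ z r ∧ z r < Sp Z (i + 1) ω})) := (inter_Om0 h0 _).symm
              _ = μ (Om0 Z ∩ ({ω | (fun jj : Fin i => Z (jj : ℕ) ω) ∈ Ai}
                  ∩ {ω | Sp Z i ω ≤ z r ∧ z r < Sp Z (i + 1) ω}
                  ∩ {ω | Sp Z q' ω ≤ z L ∧ z L < Sp Z (q' + 1) ω})) := by rw [hSE2]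
              _ = μ ({ω | (fun jj : Fin i => Z (jj : ℕ) ω) ∈ Ai}
                  ∩ {ω | Sp Z i ω ≤ z r ∧ z r < Sp Z (i + 1) ω}
                  ∩ {ω | Sp Z q' ω ≤ z L ∧ z L < Sp Z (q' + 1) ω}) := inter_Om0 h0 _
              _ = μ ({ω | (fun jj : Fin i => Z (jj : ℕ) ω) ∈ Ai}
                  ∩ {ω | Sp Z i ω ≤ z r ∧ z r < Sp Z (i + 1) ω})
                  * ENNReal.ofReal (exp (-(z L - z r)) * (z L - z r) ^ (q' - i)
                    / (Nat.factorial (q' - i))) := hstep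
              _ = μ (Om0 Z ∩ ({ω | (fun jj : Fin i => Z (jj : ℕ) ω) ∈ Ai}
                  ∩ {ω | Sp Z i ω ≤ z r ∧ z r < Sp Z (i + 1) ω}))
                  * ENNReal.ofReal (exp (-(z L - z r)) * (z L - z r) ^ (q' - i)
                    / (Nat.factorial (q' - i))) := by rw [inter_Om0 h0]
              _ = μ (Om0 Z ∩ ({ω | ∀ j ∈ Finset.Icc 1 (r - 1), z j < Sp Z (k j) ω}
                  ∩ {ω | Sp Z i ω ≤ z r ∧ z r < Sp Z (i + 1) ω}))
                  * ENNReal.ofReal (exp (-(z L - z r)) * (z L - z r) ^ (q' - i)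
                    / (Nat.factorial (q' - i))) := by rw [hSE3]
              _ = μ ({ω | ∀ j ∈ Finset.Icc 1 (r - 1), z j < Sp Z (k j) ω}
                  ∩ {ω | Sp Z i ω ≤ z r ∧ z r < Sp Z (i + 1) ω})
                  * ENNReal.ofReal (exp (-(z L - z r)) * (z L - z r) ^ (q' - i)
                    / (Nat.factorial (q' - i))) := by rw [inter_Om0 h0]
              _ = ENNReal.ofReal (exp (-(z r)) * w r (i + 1))
                  * ENNReal.ofReal (exp (-(z L - z r)) * (z L - z r) ^ (q' - i)
                    / (Nat.factorial (q' - i))) := by rw [ih r hrL i hik]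
              _ = ENNReal.ofReal (exp (-(z L))
                  * (w r (i + 1) * (z L - z r) ^ (q' - i) / ↑(Nat.factorial (q' - i)))) := by
                  rw [← ENNReal.ofReal_mul' (div_nonneg (mul_nonneg (exp_pos _).le
                    (pow_nonneg hzLr _)) (Nat.cast_nonneg _))]
                  congr 1
                  rw [show -(z L) = -(z r) + -(z L - z r) by ring, Real.exp_add]
                  ring
        _ = ENNReal.ofReal (exp (-(z L)) * w L (q' + 1)) := by
            have hwnn := w_nonneg hk0 hkmono hz0 hzmono hw0 hw1 hwrec
            have hzLr : 0 ≤ z L - z r := by linarith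
            rw [← ENNReal.ofReal_sum_of_nonneg]
            · congr 1
              rw [hwrec L hL1 r hrL (q' + 1) hkr hqk1, Finset.mul_sum, sum_Icc_one]
              refine Finset.sum_congr rfl fun i hi => ?_
              rw [show q' + 1 - (i + 1) = q' - i from by omega]
            · intro i hi
              rw [Finset.mem_range] at hi
              have hwi : 0 ≤ w r (i + 1) := hwnn r (i + 1) (by omega) hi
              have : (0:ℝ) ≤ (Nat.factorial (q' - i) : ℝ) := Nat.cast_nonneg _
              positivity

end Main

end ExpCrossAux

open MeasureTheory ProbabilityTheory Real

/-- Joint upper-crossing probabilities of partial sums of i.i.d. Exp(1) variables: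
with `1 = k_0 < k_1 < ⋯`, `0 = z_0 < z_1 < ⋯` and `w` defined by the recursion
`w(0,1) = 1`, `w(ℓ,1) = 1`,
`w(ℓ,q) = Σ_{i=1}^{k_r} w(r,i)(z_ℓ − z_r)^{q−i}/(q−i)!` for `k_r < q ≤ k_{r+1}`,
one has `Pr{Σ_{q=1}^{k_j} Z_q > z_j, j = 1,…,ℓ} = e^{−z_ℓ} Σ_{q=1}^{k_ℓ} w(ℓ,q)`. -/
theorem exp_partial_sums_crossing {Ω : Type*} [MeasurableSpace Ω]
    (μ : Measure Ω) [IsProbabilityMeasure μ]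
    (Z : ℕ → Ω → ℝ) (hmeas : ∀ i, Measurable (Z i))
    (hlaw : ∀ i, Measure.map (Z i) μ = expMeasure 1)
    (hindep : iIndepFun Z μ)
    (k : ℕ → ℕ) (hk0 : k 0 = 1) (hkmono : StrictMono k)
    (z : ℕ → ℝ) (hz0 : z 0 = 0) (hzmono : StrictMono z)
    (w : ℕ → ℕ → ℝ)
    (hw0 : w 0 1 = 1)
    (hw1 : ∀ ℓ : ℕ, 1 ≤ ℓ → w ℓ 1 = 1)
    (hwrec : ∀ ℓ : ℕ, 1 ≤ ℓ → ∀ r : ℕ, r < ℓ → ∀ q : ℕ, k r < q → q ≤ k (r + 1) →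
      w ℓ q = ∑ i ∈ Finset.Icc 1 (k r),
        w r i * (z ℓ - z r) ^ (q - i) / (Nat.factorial (q - i))) :
    ∀ ℓ : ℕ, 1 ≤ ℓ →
      (μ {ω | ∀ j ∈ Finset.Icc 1 ℓ, z j < ∑ q ∈ Finset.range (k j), Z q ω}).toReal
        = exp (-(z ℓ)) * ∑ q ∈ Finset.Icc 1 (k ℓ), w ℓ q := by
  intro ℓ hℓ
  classical
  have h0 : μ (ExpCrossAux.Om0 Z)ᶜ = 0 := ExpCrossAux.mu_Om0_compl hmeas hlaw
  have hz_nonneg : ∀ r, 0 ≤ z r := by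
    intro r
    have := hzmono.monotone (Nat.zero_le r)
    rw [hz0] at this
    exact this
  have hwnn := ExpCrossAux.w_nonneg hk0 hkmono hz0 hzmono hw0 hw1 hwrec
  have hkl1 : 1 ≤ k ℓ := by
    have := hkmono.monotone (Nat.zero_le ℓ); omega
  have hsetF : {ω | ∀ j ∈ Finset.Icc 1 ℓ, z j < ∑ q ∈ Finset.range (k j), Z q ω}
      = {ω | ∀ j ∈ Finset.Icc 1 (ℓ - 1), z j < ExpCrossAux.Sp Z (k j) ω}
        ∩ {ω | z ℓ < ExpCrossAux.Sp Z (k ℓ) ω} := by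
    ext ω
    simp only [Set.mem_setOf_eq, Set.mem_inter_iff]
    constructor
    · intro h
      refine ⟨fun j hj => h j ?_, h ℓ (Finset.mem_Icc.mpr ⟨hℓ, le_rfl⟩)⟩
      rw [Finset.mem_Icc] at hj ⊢
      omega
    · rintro ⟨h1, h2⟩ j hj
      rw [Finset.mem_Icc] at hj
      rcases eq_or_lt_of_le hj.2 with rfl | hlt
      · exact h2
      · exact h1 j (Finset.mem_Icc.mpr ⟨hj.1, by omega⟩)
  have hnn : 0 ≤ exp (-(z ℓ)) * ∑ q ∈ Finset.Icc 1 (k ℓ), w ℓ q := by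
    refine mul_nonneg (exp_pos _).le (Finset.sum_nonneg fun q hq => ?_)
    rw [Finset.mem_Icc] at hq
    exact hwnn ℓ q hq.1 hq.2
  have hkey : μ {ω | ∀ j ∈ Finset.Icc 1 ℓ, z j < ∑ q ∈ Finset.range (k j), Z q ω}
      = ENNReal.ofReal (exp (-(z ℓ)) * ∑ q ∈ Finset.Icc 1 (k ℓ), w ℓ q) := by
    rw [hsetF, ExpCrossAux.partition h0 hkl1 (hz_nonneg ℓ) _
      (ExpCrossAux.measurableSet_Fev hmeas k z (ℓ - 1)) hmeas]
    have hterm : ∀ i ∈ Finset.range (k ℓ),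
        μ ({ω | ∀ j ∈ Finset.Icc 1 (ℓ - 1), z j < ExpCrossAux.Sp Z (k j) ω}
          ∩ {ω | ExpCrossAux.Sp Z i ω ≤ z ℓ ∧ z ℓ < ExpCrossAux.Sp Z (i + 1) ω})
        = ENNReal.ofReal (exp (-(z ℓ)) * w ℓ (i + 1)) := by
      intro i hi
      rw [Finset.mem_range] at hi
      exact ExpCrossAux.crux hmeas hlaw hindep hk0 hkmono hz0 hzmono hw0 hw1 hwrec ℓ i hi
    rw [Finset.sum_congr rfl hterm,
      ← ENNReal.ofReal_sum_of_nonneg (fun i hi => mul_nonneg (exp_pos _).le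
        (hwnn ℓ (i + 1) (by omega) (by rw [Finset.mem_range] at hi; omega)))]
    congr 1
    rw [Finset.mul_sum, ExpCrossAux.sum_Icc_one (k ℓ) (fun q => exp (-(z ℓ)) * w ℓ q)]
  rw [hkey, ENNReal.toReal_ofReal hnn]
end

section
/- Let X̄_n and σ̃_n be the sample mean and (biased) sample standard deviation of n i.i.d. N(μ,σ²) observations, and θ = μ/σ. For any Δ > 0 and any θ, there are constants C, c > 0 (depending on θ and Δ but not n) such that Pr{|X̄_n/σ̃_n − θ| ≥ Δ} ≤ C e^{−cn} for all n ≥ 3; consequently Σ_{n=m}^∞ Pr{|X̄_n/σ̃_n − θ| ≥ Δ} → 0 as m → ∞. -/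
open MeasureTheory ProbabilityTheory Real Filter
open scoped NNReal ENNReal Topology

-- reduction of integrals over gaussianReal to weighted Lebesgue integrals
lemma myInt_gaussian {v : ℝ≥0} (hv : v ≠ 0) (g : ℝ → ℝ) :
    ∫ x, g x ∂(gaussianReal 0 v) = ∫ x, gaussianPDFReal 0 v x * g x := by
  rw [gaussianReal_of_var_ne_zero _ hv]
  have : (gaussianPDF 0 v) = fun x => ((gaussianPDFReal 0 v x).toNNReal : ℝ≥0∞) := rfl
  rw [this, integral_withDensity_eq_integral_smul
    ((measurable_gaussianPDFReal 0 v).real_toNNReal) g]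
  congr 1 with x
  rw [NNReal.smul_def, Real.coe_toNNReal _ (gaussianPDFReal_nonneg 0 v x), smul_eq_mul]

lemma myIntegrable_gaussian {v : ℝ≥0} (hv : v ≠ 0) {g : ℝ → ℝ}
    (h : Integrable (fun x => gaussianPDFReal 0 v x * g x)) :
    Integrable g (gaussianReal 0 v) := by
  rw [gaussianReal_of_var_ne_zero _ hv]
  have hd : (gaussianPDF 0 v) = fun x => ((gaussianPDFReal 0 v x).toNNReal : ℝ≥0∞) := rfl
  rw [hd, integrable_withDensity_iff_integrable_smul
    ((measurable_gaussianPDFReal 0 v).real_toNNReal)]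
  refine h.congr (ae_of_all _ fun x => ?_)
  dsimp only
  rw [NNReal.smul_def, Real.coe_toNNReal _ (gaussianPDFReal_nonneg 0 v x), smul_eq_mul]

lemma gaussian_mgf_lin {v : ℝ≥0} (hv : 0 < v) (t : ℝ) :
    Integrable (fun x => rexp (t * x)) (gaussianReal 0 v) ∧
    ∫ x, rexp (t * x) ∂(gaussianReal 0 v) = rexp ((v:ℝ) * t ^ 2 / 2) := by
  have hv' : (0:ℝ) < v := hv
  have key : ∀ x : ℝ, gaussianPDFReal 0 v x * rexp (t * x)
      = rexp ((v:ℝ) * t ^ 2 / 2) * gaussianPDFReal (t * v) v x := by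
    intro x
    simp only [gaussianPDFReal, sub_zero]
    rw [mul_assoc, ← Real.exp_add, mul_left_comm, ← Real.exp_add]
    congr 1
    rw [Real.exp_eq_exp]
    field_simp
    ring
  constructor
  · apply myIntegrable_gaussian hv.ne'
    simpa only [key] using (integrable_gaussianPDFReal (t*v) v).const_mul _
  · rw [myInt_gaussian hv.ne']
    simp only [key]
    rw [MeasureTheory.integral_const_mul, integral_gaussianPDFReal_eq_one (t*(v:ℝ)) hv.ne', mul_one]

lemma gaussian_mgf_quad {v : ℝ≥0} (hv : 0 < v) {t : ℝ} (ht : t < 1/(2*(v:ℝ))) :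
    Integrable (fun x => rexp (t * x^2)) (gaussianReal 0 v) ∧
    ∫ x, rexp (t * x^2) ∂(gaussianReal 0 v) = (Real.sqrt (1 - 2*t*(v:ℝ)))⁻¹ := by
  have hv' : (0:ℝ) < v := hv
  set b : ℝ := 1/(2*(v:ℝ)) - t with hb
  have hbpos : 0 < b := sub_pos.mpr ht
  have h2v : (1 - 2*t*(v:ℝ)) = 2*(v:ℝ)*b := by rw [hb, mul_sub, mul_one_div_cancel (by positivity)]; ring
  have h1pos : 0 < 1 - 2*t*(v:ℝ) := by rw [h2v]; positivity
  have key : ∀ x : ℝ, gaussianPDFReal 0 v x * rexp (t * x^2)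
      = (√(2 * π * (v:ℝ)))⁻¹ * rexp (-b * x^2) := by
    intro x
    simp only [gaussianPDFReal, sub_zero]
    rw [mul_assoc]
    congr 1
    rw [← Real.exp_add, Real.exp_eq_exp]
    field_simp [hb]
    linear_combination (-x^2) * h2v
  constructor
  · apply myIntegrable_gaussian hv.ne'
    simpa only [key] using (integrable_exp_neg_mul_sq hbpos).const_mul _
  · rw [myInt_gaussian hv.ne']
    simp only [key]
    rw [MeasureTheory.integral_const_mul, integral_gaussian]
    have hπ : (0:ℝ) < 2 * π * v := by positivity
    have : π / b = (2 * π * (v:ℝ)) / (1 - 2*t*(v:ℝ)) := by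
      rw [h2v]; field_simp
    rw [this, Real.sqrt_div hπ.le, div_eq_mul_inv, ← mul_assoc,
      inv_mul_cancel₀ (Real.sqrt_ne_zero'.mpr hπ), one_mul]

lemma exists_pos_arg {f : ℝ → ℝ} {d b : ℝ} (hf : HasDerivAt f d 0) (h0 : f 0 = 0)
    (hd : 0 < d) (hb : 0 < b) : ∃ t : ℝ, 0 < t ∧ t < b ∧ 0 < f t := by
  have hs := hasDerivAt_iff_tendsto_slope.mp hf
  have h1 : ∀ᶠ t in 𝓝[≠] (0:ℝ), 0 < slope f 0 t := hs.eventually (eventually_gt_nhds hd)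
  have h1' : ∀ᶠ t in 𝓝[>] (0:ℝ), 0 < slope f 0 t :=
    h1.filter_mono (nhdsWithin_mono _ (show Set.Ioi (0:ℝ) ⊆ {(0:ℝ)}ᶜ from fun x hx => Set.mem_compl_singleton_iff.mpr (ne_of_gt hx)))
  have h2 : ∀ᶠ t in 𝓝[>] (0:ℝ), t < b :=
    mem_nhdsWithin_of_mem_nhds (Iio_mem_nhds hb)
  obtain ⟨t, ⟨hslope, htb⟩, ht⟩ := ((h1'.and h2).and self_mem_nhdsWithin).exists
  refine ⟨t, ht, htb, ?_⟩
  rw [slope_def_field, h0, sub_zero, sub_zero] at hslope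
  have := mul_pos hslope ht
  rwa [div_mul_cancel₀ _ (ne_of_gt ht)] at this

lemma exists_neg_arg {f : ℝ → ℝ} {d : ℝ} (hf : HasDerivAt f d 0) (h0 : f 0 = 0)
    (hd : d < 0) : ∃ t : ℝ, t < 0 ∧ 0 < f t := by
  have hs := hasDerivAt_iff_tendsto_slope.mp hf
  have h1 : ∀ᶠ t in 𝓝[≠] (0:ℝ), slope f 0 t < 0 := hs.eventually (eventually_lt_nhds hd)
  have h1' : ∀ᶠ t in 𝓝[<] (0:ℝ), slope f 0 t < 0 :=
    h1.filter_mono (nhdsWithin_mono _ (show Set.Iio (0:ℝ) ⊆ {(0:ℝ)}ᶜ from fun x hx => Set.mem_compl_singleton_iff.mpr (ne_of_lt hx)))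
  obtain ⟨t, hslope, ht⟩ := (h1'.and self_mem_nhdsWithin).exists
  refine ⟨t, ht, ?_⟩
  rw [slope_def_field, h0, sub_zero, sub_zero] at hslope
  have := mul_pos_of_neg_of_neg hslope ht
  rwa [div_mul_cancel₀ _ (ne_of_lt ht)] at this

lemma rate_hasDerivAt (a V : ℝ) :
    HasDerivAt (fun t : ℝ => t * a + Real.log (1 - 2*t*V)/2) (a - V) 0 := by
  have h1 : HasDerivAt (fun t : ℝ => 1 - 2*t*V) (-(2*V)) 0 := by
    have := ((hasDerivAt_id' (x := (0:ℝ))).const_mul 2).mul_const V |>.const_sub 1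
    exact this.congr_deriv (by ring)
  have h2 : HasDerivAt (fun t : ℝ => Real.log (1 - 2*t*V)) (-(2*V)/(1 - 2*0*V)) 0 :=
    h1.log (by norm_num)
  have h3 : HasDerivAt (fun t : ℝ => t * a) a 0 := by
    simpa using (hasDerivAt_id (0:ℝ)).mul_const a
  have := h3.add (h2.div_const 2)
  exact this.congr_deriv (by simp only [mul_zero, zero_mul, sub_zero, div_one]; ring)

lemma chernoff_upper {Ω : Type*} [MeasurableSpace Ω] (P : Measure Ω) [IsProbabilityMeasure P]
    (Y : ℕ → Ω → ℝ) (hYm : ∀ i, Measurable (Y i))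
    (hYi : iIndepFun Y P)
    {t L : ℝ} (ht : 0 ≤ t)
    (hint : ∀ i, Integrable (fun ω => rexp (t * Y i ω)) P)
    (hmgf : ∀ i, mgf (Y i) P t = rexp L)
    (a : ℝ) (n : ℕ) :
    (P {ω | (n:ℝ) * a ≤ ∑ i ∈ Finset.range n, Y i ω}).toReal
      ≤ rexp (-(n:ℝ) * (t * a - L)) := by
  have hI : Integrable (fun ω => rexp (t * (∑ i ∈ Finset.range n, Y i) ω)) P :=
    hYi.integrable_exp_mul_sum hYm (fun i _ => hint i)
  have h := measure_ge_le_exp_mul_mgf (X := ∑ i ∈ Finset.range n, Y i) (μ := P)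
    ((n:ℝ)*a) ht hI
  have hset : {ω | (n:ℝ)*a ≤ (∑ i ∈ Finset.range n, Y i) ω}
      = {ω | (n:ℝ)*a ≤ ∑ i ∈ Finset.range n, Y i ω} := by
    simp [Finset.sum_apply]
  rw [hset] at h
  refine h.trans_eq ?_
  rw [hYi.mgf_sum hYm, Finset.prod_congr rfl (fun i _ => hmgf i), Finset.prod_const,
    Finset.card_range, ← Real.exp_nat_mul, ← Real.exp_add]
  congr 1; ring

lemma chernoff_lower {Ω : Type*} [MeasurableSpace Ω] (P : Measure Ω) [IsProbabilityMeasure P]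
    (Y : ℕ → Ω → ℝ) (hYm : ∀ i, Measurable (Y i))
    (hYi : iIndepFun Y P)
    {t L : ℝ} (ht : t ≤ 0)
    (hint : ∀ i, Integrable (fun ω => rexp (t * Y i ω)) P)
    (hmgf : ∀ i, mgf (Y i) P t = rexp L)
    (a : ℝ) (n : ℕ) :
    (P {ω | ∑ i ∈ Finset.range n, Y i ω ≤ (n:ℝ) * a}).toReal
      ≤ rexp (-(n:ℝ) * (t * a - L)) := by
  have hI : Integrable (fun ω => rexp (t * (∑ i ∈ Finset.range n, Y i) ω)) P :=
    hYi.integrable_exp_mul_sum hYm (fun i _ => hint i)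
  have h := measure_le_le_exp_mul_mgf (X := ∑ i ∈ Finset.range n, Y i) (μ := P)
    ((n:ℝ)*a) ht hI
  have hset : {ω | (∑ i ∈ Finset.range n, Y i) ω ≤ (n:ℝ)*a}
      = {ω | ∑ i ∈ Finset.range n, Y i ω ≤ (n:ℝ)*a} := by
    simp [Finset.sum_apply]
  rw [hset] at h
  refine h.trans_eq ?_
  rw [hYi.mgf_sum hYm, Finset.prod_congr rfl (fun i _ => hmgf i), Finset.prod_const,
    Finset.card_range, ← Real.exp_nat_mul, ← Real.exp_add]
  congr 1; ring

lemma inv_sqrt_eq_exp {u : ℝ} (hu : 0 < u) :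
    (Real.sqrt u)⁻¹ = rexp (-(Real.log u / 2)) := by
  rw [Real.sqrt_eq_rpow, Real.rpow_def_of_pos hu, ← Real.exp_neg]
  congr 1; ring

lemma toReal_le_four_aux {Ω : Type*} [MeasurableSpace Ω] (P : Measure Ω)
    [IsProbabilityMeasure P] {S E1 E2 E3 E4 : Set Ω} (h : S ⊆ E1 ∪ E2 ∪ E3 ∪ E4) :
    (P S).toReal ≤ (P E1).toReal + (P E2).toReal + (P E3).toReal + (P E4).toReal := by
  have h1 : P S ≤ P E1 + P E2 + P E3 + P E4 := by
    calc P S ≤ P (E1 ∪ E2 ∪ E3 ∪ E4) := measure_mono h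
      _ ≤ P (E1 ∪ E2 ∪ E3) + P E4 := measure_union_le _ _
      _ ≤ (P (E1 ∪ E2) + P E3) + P E4 := by gcongr; exact measure_union_le _ _
      _ ≤ ((P E1 + P E2) + P E3) + P E4 := by gcongr; exact measure_union_le _ _
  have h2 := ENNReal.toReal_mono (by finiteness) h1
  rwa [ENNReal.toReal_add (by finiteness) (by finiteness),
    ENNReal.toReal_add (by finiteness) (by finiteness),
    ENNReal.toReal_add (by finiteness) (by finiteness)] at h2
/-- Exponential concentration of the self-normalized mean of i.i.d. Gaussians:
for `θ = μ/σ` and any `Δ > 0`, there are `C, c > 0` with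
`Pr{|X̄_n/σ̃_n − θ| ≥ Δ} ≤ C e^{−cn}` for all `n ≥ 3`; consequently the tail sums
`Σ_{n≥m} Pr{|X̄_n/σ̃_n − θ| ≥ Δ}` tend to `0` as `m → ∞`. -/
theorem t_statistic_concentration {Ω : Type*} [MeasurableSpace Ω]
    (P : Measure Ω) [IsProbabilityMeasure P]
    (m : ℝ) (v : ℝ≥0) (hv : 0 < v)
    (X : ℕ → Ω → ℝ) (hmeas : ∀ i, Measurable (X i))
    (hlaw : ∀ i, Measure.map (X i) P = gaussianReal m v)
    (hindep : iIndepFun X P)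
    (θ : ℝ) (hθ : θ = m / Real.sqrt v)
    (Δ : ℝ) (hΔ : 0 < Δ)
    (T : ℕ → Ω → ℝ)
    (hT : ∀ n ω, T n ω =
      ((∑ i ∈ Finset.range n, X i ω) / n) /
        Real.sqrt ((∑ i ∈ Finset.range n,
          (X i ω - (∑ j ∈ Finset.range n, X j ω) / n) ^ 2) / n)) :
    (∃ C c : ℝ, 0 < C ∧ 0 < c ∧
      ∀ n : ℕ, 3 ≤ n → (P {ω | Δ ≤ |T n ω - θ|}).toReal ≤ C * exp (-c * n)) ∧
    Tendsto (fun M : ℕ => ∑' n : ℕ, (P {ω | Δ ≤ |T (M + n) ω - θ|}).toReal)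
      atTop (nhds 0) := by
  have hv' : v ≠ 0 := hv.ne'
  set V : ℝ := (v : ℝ) with hVdef
  have hV0 : (0 : ℝ) < V := hv
  -- the centered variables and their squares
  set Y : ℕ → Ω → ℝ := fun i ω => X i ω - m with hYdef
  set Z : ℕ → Ω → ℝ := fun i ω => (X i ω - m) ^ 2 with hZdef
  have hYm : ∀ i, Measurable (Y i) := fun i => (hmeas i).sub measurable_const
  have hZm : ∀ i, Measurable (Z i) := fun i => ((hmeas i).sub measurable_const).pow_const 2
  have hYindep : iIndepFun Y P :=
    hindep.comp (fun _ x => x - m) (fun _ => measurable_id.sub_const m)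
  have hZindep : iIndepFun Z P :=
    hindep.comp (fun _ x => (x - m) ^ 2) (fun _ => (measurable_id.sub_const m).pow_const 2)
  have hYlaw : ∀ i, Measure.map (Y i) P = gaussianReal 0 v := by
    intro i
    have hfun : Y i = (· + (-m)) ∘ X i := by ext ω; simp [hYdef, sub_eq_add_neg]
    rw [hfun, ← Measure.map_map (measurable_id'.add_const (-m)) (hmeas i), hlaw i,
      gaussianReal_map_add_const]
    simp
  -- transfer of integrability and mgf values from the gaussian law
  have hlinI : ∀ t : ℝ, ∀ i, Integrable (fun ω => rexp (t * Y i ω)) P := by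
    intro t i
    have h2 : Integrable (fun x => rexp (t * x)) (Measure.map (Y i) P) := by
      rw [hYlaw i]; exact (gaussian_mgf_lin hv t).1
    exact (integrable_map_measure
      (Continuous.aestronglyMeasurable (by fun_prop)) (hYm i).aemeasurable).mp h2
  have hlinM : ∀ t : ℝ, ∀ i, mgf (Y i) P t = rexp (V * t ^ 2 / 2) := by
    intro t i
    have h1 : mgf (Y i) P t = ∫ x, rexp (t * x) ∂(Measure.map (Y i) P) := by
      rw [integral_map (hYm i).aemeasurable (Continuous.aestronglyMeasurable (by fun_prop))]
      rfl
    rw [h1, hYlaw i, (gaussian_mgf_lin hv t).2]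
  have hquadI : ∀ t : ℝ, t < 1 / (2 * V) → ∀ i, Integrable (fun ω => rexp (t * Z i ω)) P := by
    intro t ht i
    have h2 : Integrable (fun x => rexp (t * x ^ 2)) (Measure.map (Y i) P) := by
      rw [hYlaw i]; exact (gaussian_mgf_quad hv ht).1
    have h3 := (integrable_map_measure
      (Continuous.aestronglyMeasurable (by fun_prop)) (hYm i).aemeasurable).mp h2
    exact h3
  have hquadM : ∀ t : ℝ, t < 1 / (2 * V) →
      ∀ i, mgf (Z i) P t = rexp (-(Real.log (1 - 2 * t * V) / 2)) := by
    intro t ht i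
    have h2v : (1 - 2 * t * V) = 2 * V * (1 / (2 * V) - t) := by field_simp
    have h1pos : 0 < 1 - 2 * t * V := by
      rw [h2v]; have : 0 < 1 / (2 * V) - t := sub_pos.mpr ht; positivity
    have h1 : mgf (Z i) P t = ∫ x, rexp (t * x ^ 2) ∂(Measure.map (Y i) P) := by
      rw [integral_map (hYm i).aemeasurable (Continuous.aestronglyMeasurable (by fun_prop))]
      rfl
    rw [h1, hYlaw i, (gaussian_mgf_quad hv ht).2, inv_sqrt_eq_exp h1pos]
  -- choice of δ by continuity
  set g : ℝ × ℝ → ℝ := fun p => (m + p.1) / Real.sqrt (p.2 - p.1 ^ 2) with hgdef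
  have hcont : ContinuousAt g ((0 : ℝ), V) := by
    apply ContinuousAt.div
    · fun_prop
    · exact Continuous.continuousAt (by fun_prop)
    · simp only [hgdef]
      norm_num
      exact (Real.sqrt_pos.mpr hV0).ne'
  have hgval : g (0, V) = θ := by simp [hgdef, hθ, hVdef]
  obtain ⟨δ, hδpos, hδ⟩ := Metric.continuousAt_iff.mp hcont Δ hΔ
  -- the four chernoff rates
  have hr1 : 0 < δ ^ 2 / (2 * V) := by positivity
  obtain ⟨t₃, ht₃pos, ht₃lt, hr₃⟩ :=
    exists_pos_arg (rate_hasDerivAt (V + δ) V) (by norm_num)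
      (by rw [show V + δ - V = δ by ring]; exact hδpos) (by positivity : (0:ℝ) < 1 / (2 * V))
  obtain ⟨t₄, ht₄neg, hr₄⟩ :=
    exists_neg_arg (rate_hasDerivAt (V - δ) V) (by norm_num)
      (by rw [show V - δ - V = -δ by ring]; exact neg_lt_zero.mpr hδpos)
  set r₃ : ℝ := t₃ * (V + δ) + Real.log (1 - 2 * t₃ * V) / 2 with hr₃def
  set r₄ : ℝ := t₄ * (V - δ) + Real.log (1 - 2 * t₄ * V) / 2 with hr₄def
  set c : ℝ := min (δ ^ 2 / (2 * V)) (min r₃ r₄) with hcdef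
  have hcpos : 0 < c := lt_min hr1 (lt_min hr₃ hr₄)
  -- main per-n bound
  have main : ∀ n : ℕ, 1 ≤ n → (P {ω | Δ ≤ |T n ω - θ|}).toReal ≤ 4 * rexp (-c * n) := by
    intro n hn
    have hnpos : (0 : ℝ) < n := by exact_mod_cast hn
    -- event inclusion
    have hsub : {ω | Δ ≤ |T n ω - θ|} ⊆
        {ω | (n : ℝ) * δ ≤ ∑ i ∈ Finset.range n, Y i ω} ∪
        {ω | ∑ i ∈ Finset.range n, Y i ω ≤ (n : ℝ) * (-δ)} ∪
        {ω | (n : ℝ) * (V + δ) ≤ ∑ i ∈ Finset.range n, Z i ω} ∪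
        {ω | ∑ i ∈ Finset.range n, Z i ω ≤ (n : ℝ) * (V - δ)} := by
      intro ω hω
      by_contra hcon
      simp only [Set.mem_union, Set.mem_setOf_eq, not_or, not_le] at hcon
      obtain ⟨⟨⟨h1, h2⟩, h3⟩, h4⟩ := hcon
      set A : ℝ := ∑ i ∈ Finset.range n, Y i ω with hAdef
      set Q : ℝ := ∑ i ∈ Finset.range n, Z i ω with hQdef
      set S : ℝ := ∑ i ∈ Finset.range n, X i ω with hSdef
      have hA : A = S - n * m := by
        simp [hAdef, hYdef, hSdef, Finset.sum_sub_distrib, Finset.card_range]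
      have hSn : S / n = m + A / n := by rw [hA]; field_simp; ring
      have hQid : ∑ i ∈ Finset.range n, (X i ω - S / n) ^ 2 = Q - n * (A / n) ^ 2 := by
        have hterm : ∀ i ∈ Finset.range n, (X i ω - S / n) ^ 2
            = (X i ω - m) ^ 2 - 2 * (A / n) * (X i ω - m) + (A / n) ^ 2 := by
          intro i _; rw [hSn]; ring
        have hsumY : ∑ i ∈ Finset.range n, (X i ω - m) = A := by
          simp [hAdef, hYdef]
        have hsumZ : ∑ i ∈ Finset.range n, (X i ω - m) ^ 2 = Q := by
          simp [hQdef, hZdef]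
        rw [Finset.sum_congr rfl hterm, Finset.sum_add_distrib, Finset.sum_sub_distrib,
          ← Finset.mul_sum, hsumY, hsumZ, Finset.sum_const, Finset.card_range,
          nsmul_eq_mul]
        field_simp
        ring
      have hTform : T n ω = g (A / n, Q / n) := by
        have hdiv : (Q - n * (A / n) ^ 2) / n = Q / n - (A / n) ^ 2 := by
          rw [sub_div, mul_div_cancel_left₀ _ (ne_of_gt hnpos)]
        rw [hT n ω, hgdef]
        simp only
        rw [← hSdef, hQid, hSn, hdiv]
      have hAn : |A / n| < δ := by
        have hc1 : (n:ℝ) * δ = δ * n := by ring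
        have hc2 : (n:ℝ) * -δ = -(δ * n) := by ring
        have habs : |A| < δ * n := abs_lt.mpr ⟨by linarith, by linarith⟩
        rw [abs_div, abs_of_pos hnpos, div_lt_iff₀ hnpos]
        exact habs
      have hQn : |Q / n - V| < δ := by
        have hrw : Q / n - V = (Q - n * V) / n := by field_simp
        have hc3 : (n:ℝ) * (V + δ) = n * V + δ * n := by ring
        have hc4 : (n:ℝ) * (V - δ) = n * V - δ * n := by ring
        have habs : |Q - n * V| < δ * n := abs_lt.mpr ⟨by linarith, by linarith⟩
        rw [hrw, abs_div, abs_of_pos hnpos, div_lt_iff₀ hnpos]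
        exact habs
      have hdist : dist ((A / n, Q / n) : ℝ × ℝ) ((0 : ℝ), V) < δ := by
        rw [Prod.dist_eq]
        apply max_lt
        · rw [Real.dist_eq, sub_zero]; exact hAn
        · rw [Real.dist_eq]; exact hQn
      have h5 := hδ hdist
      rw [hgval, Real.dist_eq, ← hTform] at h5
      have hω' : Δ ≤ |T n ω - θ| := hω
      linarith
    -- chernoff bounds for the four events
    have hb1 := chernoff_upper P Y hYm hYindep (t := δ / V) (L := V * (δ / V) ^ 2 / 2)
      (by positivity) (hlinI _) (hlinM _) δ n
    have hb2 := chernoff_lower P Y hYm hYindep (t := -(δ / V)) (L := V * (-(δ / V)) ^ 2 / 2)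
      (by simp; positivity) (hlinI _) (hlinM _) (-δ) n
    have hb3 := chernoff_upper P Z hZm hZindep (t := t₃) (L := -(Real.log (1 - 2 * t₃ * V) / 2))
      ht₃pos.le (hquadI _ ht₃lt) (hquadM _ ht₃lt) (V + δ) n
    have hb4 := chernoff_lower P Z hZm hZindep (t := t₄) (L := -(Real.log (1 - 2 * t₄ * V) / 2))
      ht₄neg.le (hquadI _ (ht₄neg.trans (by positivity))) (hquadM _ (ht₄neg.trans (by positivity)))
      (V - δ) n
    -- rates dominate c
    have hrate : ∀ r : ℝ, c ≤ r → rexp (-(n : ℝ) * r) ≤ rexp (-c * n) := by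
      intro r hr
      apply Real.exp_le_exp.mpr
      nlinarith [hnpos.le]
    have e1 : rexp (-(n:ℝ) * (δ / V * δ - V * (δ / V) ^ 2 / 2)) ≤ rexp (-c * n) := by
      apply hrate
      have heq : δ / V * δ - V * (δ / V) ^ 2 / 2 = δ ^ 2 / (2 * V) := by
        field_simp; ring
      rw [heq, hcdef]; exact min_le_left _ _
    have e2 : rexp (-(n:ℝ) * (-(δ / V) * -δ - V * (-(δ / V)) ^ 2 / 2)) ≤ rexp (-c * n) := by
      apply hrate
      have heq : -(δ / V) * -δ - V * (-(δ / V)) ^ 2 / 2 = δ ^ 2 / (2 * V) := by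
        field_simp; ring
      rw [heq, hcdef]; exact min_le_left _ _
    have e3 : rexp (-(n:ℝ) * (t₃ * (V + δ) - -(Real.log (1 - 2 * t₃ * V) / 2))) ≤ rexp (-c * n) := by
      apply hrate
      have heq : t₃ * (V + δ) - -(Real.log (1 - 2 * t₃ * V) / 2) = r₃ := by rw [hr₃def]; ring
      rw [heq, hcdef]; exact le_trans (min_le_right _ _) (min_le_left _ _)
    have e4 : rexp (-(n:ℝ) * (t₄ * (V - δ) - -(Real.log (1 - 2 * t₄ * V) / 2))) ≤ rexp (-c * n) := by
      apply hrate
      have heq : t₄ * (V - δ) - -(Real.log (1 - 2 * t₄ * V) / 2) = r₄ := by rw [hr₄def]; ring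
      rw [heq, hcdef]; exact le_trans (min_le_right _ _) (min_le_right _ _)
    have htot := toReal_le_four_aux P hsub
    have hfour := add_le_add (add_le_add (add_le_add (hb1.trans e1) (hb2.trans e2))
      (hb3.trans e3)) (hb4.trans e4)
    linarith
  constructor
  · exact ⟨4, c, by norm_num, hcpos, fun n hn => main n (le_trans (by norm_num) hn)⟩
  · set q : ℝ := rexp (-c) with hqdef
    have hq0 : 0 ≤ q := (Real.exp_pos _).le
    have hq1 : q < 1 := by
      rw [hqdef]
      calc rexp (-c) < rexp 0 := Real.exp_lt_exp.mpr (neg_lt_zero.mpr hcpos)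
        _ = 1 := Real.exp_zero
    have hgeom : Summable (fun n : ℕ => q ^ n) := summable_geometric_of_lt_one hq0 hq1
    apply squeeze_zero' (g := fun M : ℕ => (4 * (1 - q)⁻¹) * rexp (-c * M))
    · exact Eventually.of_forall (fun M => tsum_nonneg (fun n => ENNReal.toReal_nonneg))
    · filter_upwards [eventually_ge_atTop 1] with M hM
      have hterm : ∀ n : ℕ, (P {ω | Δ ≤ |T (M + n) ω - θ|}).toReal
          ≤ (4 * rexp (-c * M)) * q ^ n := by
        intro n
        refine (main (M + n) (le_trans hM (Nat.le_add_right M n))).trans_eq ?_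
        rw [mul_assoc, hqdef, ← Real.exp_nat_mul, ← Real.exp_add]
        congr 2
        push_cast
        ring
      have hsum2 : Summable (fun n : ℕ => (4 * rexp (-c * M)) * q ^ n) := hgeom.mul_left _
      have hsum1 : Summable (fun n : ℕ => (P {ω | Δ ≤ |T (M + n) ω - θ|}).toReal) :=
        Summable.of_nonneg_of_le (fun n => ENNReal.toReal_nonneg) hterm hsum2
      calc ∑' n : ℕ, (P {ω | Δ ≤ |T (M + n) ω - θ|}).toReal
          ≤ ∑' n : ℕ, (4 * rexp (-c * M)) * q ^ n := Summable.tsum_le_tsum hterm hsum1 hsum2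
        _ = (4 * rexp (-c * M)) * (1 - q)⁻¹ := by
            rw [tsum_mul_left, tsum_geometric_of_lt_one hq0 hq1]
        _ = (4 * (1 - q)⁻¹) * rexp (-c * M) := by ring
    · have h0 : Tendsto (fun M : ℕ => q ^ M) atTop (nhds 0) :=
        tendsto_pow_atTop_nhds_zero_of_lt_one hq0 hq1
      have heq : (fun M : ℕ => (4 * (1 - q)⁻¹) * rexp (-c * M))
          = fun M : ℕ => (4 * (1 - q)⁻¹) * q ^ M := by
        funext M
        rw [hqdef, ← Real.exp_nat_mul]
        congr 1
        ring
      rw [heq]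
      simpa using h0.const_mul (4 * (1 - q)⁻¹)
end

section
/- Let Z be an unbiased estimator of θ with everywhere-finite MGF, and suppose additionally that Z is a unimodal-likelihood estimator of θ (the likelihood of any observation is non-decreasing in θ below the observed estimate and non-increasing above it). Then the Chernoff function C(z, θ) = inf_{ρ∈ℝ} E_θ[e^{ρ(Z−z)}] is non-decreasing in θ for θ ≤ z and non-increasing in θ for θ ≥ z; symmetrically, C(z, θ) is non-decreasing in z for z ≤ θ and non-increasing in z for z ≥ θ. -/
open MeasureTheory Real

lemma CFM_integrable (ν : Measure ℝ)
    (hmgf : ∀ ρ : ℝ, Integrable (fun x => exp (ρ * x)) ν) (ρ z : ℝ) :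
    Integrable (fun x => exp (ρ * (x - z))) ν := by
  have h : (fun x : ℝ => exp (ρ * (x - z))) = fun x => exp (-(ρ * z)) * exp (ρ * x) := by
    funext x; rw [← exp_add]; ring_nf
  rw [h]
  exact (hmgf ρ).const_mul _

lemma CFM_int_id (ν : Measure ℝ) (hmgf : ∀ ρ : ℝ, Integrable (fun x => exp (ρ * x)) ν) :
    Integrable (fun x : ℝ => x) ν := by
  refine ((hmgf 1).add (hmgf (-1))).mono' measurable_id.aestronglyMeasurable ?_
  refine Filter.Eventually.of_forall fun x => ?_
  have h1 : |x| + 1 ≤ exp |x| := add_one_le_exp _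
  have h2 : exp |x| ≤ exp (1 * x) + exp ((-1) * x) := by
    rcases abs_cases x with ⟨h, _⟩ | ⟨h, _⟩
    · rw [h]
      calc exp x ≤ exp x + exp ((-1)*x) := le_add_of_nonneg_right (exp_pos _).le
        _ = exp (1*x) + exp ((-1)*x) := by rw [one_mul]
    · rw [h]
      calc exp (-x) ≤ exp (1*x) + exp (-x) := le_add_of_nonneg_left (exp_pos _).le
        _ = exp (1*x) + exp ((-1)*x) := by rw [neg_one_mul]
  simp only [Pi.add_apply]
  have h3 : ‖x‖ = |x| := rfl
  rw [h3]
  linarith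

lemma CFM_jensen (ν : Measure ℝ) [IsProbabilityMeasure ν] (θ : ℝ)
    (hmean : ∫ x, x ∂ν = θ)
    (hmgf : ∀ ρ : ℝ, Integrable (fun x => exp (ρ * x)) ν) (ρ z : ℝ) :
    exp (ρ * (θ - z)) ≤ ∫ x, exp (ρ * (x - z)) ∂ν := by
  have hx : Integrable (fun x : ℝ => x) ν := CFM_int_id ν hmgf
  have key : ∀ x : ℝ, exp (ρ * (θ - z)) + exp (ρ * (θ - z)) * (ρ * (x - θ))
      ≤ exp (ρ * (x - z)) := by
    intro x
    have h := add_one_le_exp (ρ * (x - z) - ρ * (θ - z))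
    have h2 := mul_le_mul_of_nonneg_left h (exp_nonneg (ρ * (θ - z)))
    rw [← exp_add] at h2
    have e1 : ρ * (θ - z) + (ρ * (x - z) - ρ * (θ - z)) = ρ * (x - z) := by ring
    rw [e1] at h2
    calc exp (ρ * (θ - z)) + exp (ρ * (θ - z)) * (ρ * (x - θ))
        = exp (ρ * (θ - z)) * (ρ * (x - z) - ρ * (θ - z) + 1) := by ring
      _ ≤ exp (ρ * (x - z)) := h2
  have hInt1 : Integrable
      (fun x : ℝ => exp (ρ * (θ - z)) + exp (ρ * (θ - z)) * (ρ * (x - θ))) ν := by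
    refine (integrable_const _).add ?_
    have : Integrable (fun x : ℝ => x - θ) ν := hx.sub (integrable_const θ)
    exact (this.const_mul ρ).const_mul _
  have hInt2 := CFM_integrable ν hmgf ρ z
  have hcalc : ∫ x, (exp (ρ * (θ - z)) + exp (ρ * (θ - z)) * (ρ * (x - θ))) ∂ν
      = exp (ρ * (θ - z)) := by
    rw [integral_add (integrable_const _)]
    · rw [integral_const, integral_const_mul, integral_const_mul, probReal_univ]
      rw [integral_sub hx (integrable_const θ), hmean, integral_const, probReal_univ]
      simp
    · have : Integrable (fun x : ℝ => x - θ) ν := hx.sub (integrable_const θ)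
      exact (this.const_mul ρ).const_mul _
  calc exp (ρ * (θ - z))
      = ∫ x, (exp (ρ * (θ - z)) + exp (ρ * (θ - z)) * (ρ * (x - θ))) ∂ν := hcalc.symm
    _ ≤ ∫ x, exp (ρ * (x - z)) ∂ν := integral_mono hInt1 hInt2 key

lemma CFM_dom_Iio (ν : ℝ → Measure ℝ) (hprob : ∀ θ, IsProbabilityMeasure (ν θ))
    (hULE_le : ∀ z : ℝ, ∀ s : Set ℝ, MeasurableSet s → s ⊆ Set.Iic z →
      ∀ θ₁ θ₂ : ℝ, z ≤ θ₁ → θ₁ ≤ θ₂ → ν θ₂ s ≤ ν θ₁ s)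
    (hULE_ge : ∀ z : ℝ, ∀ s : Set ℝ, MeasurableSet s → s ⊆ Set.Ici z →
      ∀ θ₁ θ₂ : ℝ, θ₁ ≤ θ₂ → θ₂ ≤ z → ν θ₁ s ≤ ν θ₂ s)
    (θ₁ θ₂ : ℝ) (h : θ₁ ≤ θ₂) (c : ℝ) : ν θ₂ (Set.Iio c) ≤ ν θ₁ (Set.Iio c) := by
  haveI := hprob θ₁; haveI := hprob θ₂; haveI := hprob c
  rcases le_total c θ₁ with h1 | h1
  · exact hULE_le c _ measurableSet_Iio Set.Iio_subset_Iic_self θ₁ θ₂ h1 h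
  rcases le_total θ₂ c with h2 | h2
  · -- θ₁ ≤ θ₂ ≤ c : complement route
    have key : ν θ₁ (Set.Ici c) ≤ ν θ₂ (Set.Ici c) :=
      hULE_ge c _ measurableSet_Ici subset_rfl θ₁ θ₂ h h2
    have e₁ : ν θ₁ (Set.Iio c) = 1 - ν θ₁ (Set.Ici c) := by
      rw [← Set.compl_Ici, prob_compl_eq_one_sub measurableSet_Ici]
    have e₂ : ν θ₂ (Set.Iio c) = 1 - ν θ₂ (Set.Ici c) := by
      rw [← Set.compl_Ici, prob_compl_eq_one_sub measurableSet_Ici]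
    rw [e₁, e₂]
    exact tsub_le_tsub_left key 1
  · -- middle: θ₁ ≤ c ≤ θ₂, use intermediate parameter c
    have h2' : ν θ₂ (Set.Iio c) ≤ ν c (Set.Iio c) :=
      hULE_le c _ measurableSet_Iio Set.Iio_subset_Iic_self c θ₂ le_rfl h2
    have h1' : ν θ₁ (Set.Ici c) ≤ ν c (Set.Ici c) :=
      hULE_ge c _ measurableSet_Ici subset_rfl θ₁ c h1 le_rfl
    have e₁ : ν θ₁ (Set.Iio c) = 1 - ν θ₁ (Set.Ici c) := by
      rw [← Set.compl_Ici, prob_compl_eq_one_sub measurableSet_Ici]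
    have ec : ν c (Set.Iio c) = 1 - ν c (Set.Ici c) := by
      rw [← Set.compl_Ici, prob_compl_eq_one_sub measurableSet_Ici]
    calc ν θ₂ (Set.Iio c) ≤ ν c (Set.Iio c) := h2'
      _ = 1 - ν c (Set.Ici c) := ec
      _ ≤ 1 - ν θ₁ (Set.Ici c) := tsub_le_tsub_left h1' 1
      _ = ν θ₁ (Set.Iio c) := e₁.symm

lemma CFM_dom_Iic (ν : ℝ → Measure ℝ) (hprob : ∀ θ, IsProbabilityMeasure (ν θ))
    (hULE_le : ∀ z : ℝ, ∀ s : Set ℝ, MeasurableSet s → s ⊆ Set.Iic z →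
      ∀ θ₁ θ₂ : ℝ, z ≤ θ₁ → θ₁ ≤ θ₂ → ν θ₂ s ≤ ν θ₁ s)
    (hULE_ge : ∀ z : ℝ, ∀ s : Set ℝ, MeasurableSet s → s ⊆ Set.Ici z →
      ∀ θ₁ θ₂ : ℝ, θ₁ ≤ θ₂ → θ₂ ≤ z → ν θ₁ s ≤ ν θ₂ s)
    (θ₁ θ₂ : ℝ) (h : θ₁ ≤ θ₂) (c : ℝ) : ν θ₂ (Set.Iic c) ≤ ν θ₁ (Set.Iic c) := by
  haveI := hprob θ₁; haveI := hprob θ₂; haveI := hprob c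
  rcases le_total c θ₁ with h1 | h1
  · exact hULE_le c _ measurableSet_Iic subset_rfl θ₁ θ₂ h1 h
  rcases le_total θ₂ c with h2 | h2
  · have key : ν θ₁ (Set.Ioi c) ≤ ν θ₂ (Set.Ioi c) :=
      hULE_ge c _ measurableSet_Ioi Set.Ioi_subset_Ici_self θ₁ θ₂ h h2
    have e₁ : ν θ₁ (Set.Iic c) = 1 - ν θ₁ (Set.Ioi c) := by
      rw [← Set.compl_Ioi, prob_compl_eq_one_sub measurableSet_Ioi]
    have e₂ : ν θ₂ (Set.Iic c) = 1 - ν θ₂ (Set.Ioi c) := by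
      rw [← Set.compl_Ioi, prob_compl_eq_one_sub measurableSet_Ioi]
    rw [e₁, e₂]
    exact tsub_le_tsub_left key 1
  · have h2' : ν θ₂ (Set.Iic c) ≤ ν c (Set.Iic c) :=
      hULE_le c _ measurableSet_Iic subset_rfl c θ₂ le_rfl h2
    have h1' : ν θ₁ (Set.Ioi c) ≤ ν c (Set.Ioi c) :=
      hULE_ge c _ measurableSet_Ioi Set.Ioi_subset_Ici_self θ₁ c h1 le_rfl
    have e₁ : ν θ₁ (Set.Iic c) = 1 - ν θ₁ (Set.Ioi c) := by
      rw [← Set.compl_Ioi, prob_compl_eq_one_sub measurableSet_Ioi]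
    have ec : ν c (Set.Iic c) = 1 - ν c (Set.Ioi c) := by
      rw [← Set.compl_Ioi, prob_compl_eq_one_sub measurableSet_Ioi]
    calc ν θ₂ (Set.Iic c) ≤ ν c (Set.Iic c) := h2'
      _ = 1 - ν c (Set.Ioi c) := ec
      _ ≤ 1 - ν θ₁ (Set.Ioi c) := tsub_le_tsub_left h1' 1
      _ = ν θ₁ (Set.Iic c) := e₁.symm

lemma CFM_expint_mono_pos (μ₁ μ₂ : Measure ℝ) (z ρ : ℝ) (hρ : 0 < ρ)
    (hdom : ∀ c : ℝ, μ₁ (Set.Ici c) ≤ μ₂ (Set.Ici c))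
    (hint : Integrable (fun x => exp (ρ * (x - z))) μ₂) :
    ∫ x, exp (ρ * (x - z)) ∂μ₁ ≤ ∫ x, exp (ρ * (x - z)) ∂μ₂ := by
  have hcont : Continuous fun x : ℝ => exp (ρ * (x - z)) := by continuity
  have hnn : ∀ x : ℝ, 0 ≤ exp (ρ * (x - z)) := fun x => (exp_pos _).le
  have key : ∀ t : ℝ, 0 < t →
      {a : ℝ | t ≤ exp (ρ * (a - z))} = Set.Ici (z + Real.log t / ρ) := by
    intro t ht
    ext a
    simp only [Set.mem_setOf_eq, Set.mem_Ici]
    rw [← log_le_iff_le_exp ht,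
      show z + Real.log t / ρ ≤ a ↔ Real.log t / ρ ≤ a - z from
        ⟨fun h => by linarith, fun h => by linarith⟩,
      div_le_iff₀ hρ, mul_comm]
  have hle : ∫⁻ x, ENNReal.ofReal (exp (ρ * (x - z))) ∂μ₁
      ≤ ∫⁻ x, ENNReal.ofReal (exp (ρ * (x - z))) ∂μ₂ := by
    rw [lintegral_eq_lintegral_meas_le μ₁ (Filter.Eventually.of_forall hnn)
        hcont.measurable.aemeasurable,
      lintegral_eq_lintegral_meas_le μ₂ (Filter.Eventually.of_forall hnn)
        hcont.measurable.aemeasurable]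
    refine lintegral_mono_ae ((ae_restrict_iff' measurableSet_Ioi).2
      (Filter.Eventually.of_forall fun t ht => ?_))
    rw [key t ht]
    exact hdom _
  rw [integral_eq_lintegral_of_nonneg_ae (Filter.Eventually.of_forall hnn)
      hcont.aestronglyMeasurable,
    integral_eq_lintegral_of_nonneg_ae (Filter.Eventually.of_forall hnn)
      hcont.aestronglyMeasurable]
  exact ENNReal.toReal_mono hint.lintegral_lt_top.ne hle

lemma CFM_expint_mono_neg (μ₁ μ₂ : Measure ℝ) (z ρ : ℝ) (hρ : ρ < 0)
    (hdom : ∀ c : ℝ, μ₁ (Set.Iic c) ≤ μ₂ (Set.Iic c))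
    (hint : Integrable (fun x => exp (ρ * (x - z))) μ₂) :
    ∫ x, exp (ρ * (x - z)) ∂μ₁ ≤ ∫ x, exp (ρ * (x - z)) ∂μ₂ := by
  have hcont : Continuous fun x : ℝ => exp (ρ * (x - z)) := by continuity
  have hnn : ∀ x : ℝ, 0 ≤ exp (ρ * (x - z)) := fun x => (exp_pos _).le
  have key : ∀ t : ℝ, 0 < t →
      {a : ℝ | t ≤ exp (ρ * (a - z))} = Set.Iic (z + Real.log t / ρ) := by
    intro t ht
    ext a
    simp only [Set.mem_setOf_eq, Set.mem_Iic]
    rw [← log_le_iff_le_exp ht,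
      show a ≤ z + Real.log t / ρ ↔ a - z ≤ Real.log t / ρ from
        ⟨fun h => by linarith, fun h => by linarith⟩,
      le_div_iff_of_neg hρ, mul_comm]
  have hle : ∫⁻ x, ENNReal.ofReal (exp (ρ * (x - z))) ∂μ₁
      ≤ ∫⁻ x, ENNReal.ofReal (exp (ρ * (x - z))) ∂μ₂ := by
    rw [lintegral_eq_lintegral_meas_le μ₁ (Filter.Eventually.of_forall hnn)
        hcont.measurable.aemeasurable,
      lintegral_eq_lintegral_meas_le μ₂ (Filter.Eventually.of_forall hnn)
        hcont.measurable.aemeasurable]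
    refine lintegral_mono_ae ((ae_restrict_iff' measurableSet_Ioi).2
      (Filter.Eventually.of_forall fun t ht => ?_))
    rw [key t ht]
    exact hdom _
  rw [integral_eq_lintegral_of_nonneg_ae (Filter.Eventually.of_forall hnn)
      hcont.aestronglyMeasurable,
    integral_eq_lintegral_of_nonneg_ae (Filter.Eventually.of_forall hnn)
      hcont.aestronglyMeasurable]
  exact ENNReal.toReal_mono hint.lintegral_lt_top.ne hle

/-- Monotonicity of the Chernoff function of an unbiased unimodal-likelihood
estimator: with `ν θ` the law of `Z` under parameter `θ`, mean `θ`,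
everywhere-finite MGF, and the ULE property (probabilities of events inside
`{Z ≤ z}` are non-increasing in `θ ≥ z`, and of events inside `{Z ≥ z}` are
non-decreasing in `θ ≤ z`), the function `C(z,θ) = inf_ρ E_θ[e^{ρ(Z−z)}]` is
non-decreasing in `θ` for `θ ≤ z`, non-increasing in `θ` for `θ ≥ z`,
non-decreasing in `z` for `z ≤ θ`, and non-increasing in `z` for `z ≥ θ`. -/
theorem chernoff_function_monotone_ULE
    (ν : ℝ → Measure ℝ) (hprob : ∀ θ, IsProbabilityMeasure (ν θ))
    (hmean : ∀ θ, ∫ x, x ∂(ν θ) = θ)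
    (hmgf : ∀ θ ρ : ℝ, Integrable (fun x => exp (ρ * x)) (ν θ))
    (hULE_le : ∀ z : ℝ, ∀ s : Set ℝ, MeasurableSet s → s ⊆ Set.Iic z →
      ∀ θ₁ θ₂ : ℝ, z ≤ θ₁ → θ₁ ≤ θ₂ → ν θ₂ s ≤ ν θ₁ s)
    (hULE_ge : ∀ z : ℝ, ∀ s : Set ℝ, MeasurableSet s → s ⊆ Set.Ici z →
      ∀ θ₁ θ₂ : ℝ, θ₁ ≤ θ₂ → θ₂ ≤ z → ν θ₁ s ≤ ν θ₂ s)
    (C : ℝ → ℝ → ℝ)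
    (hC : ∀ z θ : ℝ, C z θ = ⨅ ρ : ℝ, ∫ x, exp (ρ * (x - z)) ∂(ν θ)) :
    (∀ z θ₁ θ₂ : ℝ, θ₁ ≤ θ₂ → θ₂ ≤ z → C z θ₁ ≤ C z θ₂) ∧
    (∀ z θ₁ θ₂ : ℝ, z ≤ θ₁ → θ₁ ≤ θ₂ → C z θ₂ ≤ C z θ₁) ∧
    (∀ θ z₁ z₂ : ℝ, z₁ ≤ z₂ → z₂ ≤ θ → C z₁ θ ≤ C z₂ θ) ∧
    (∀ θ z₁ z₂ : ℝ, θ ≤ z₁ → z₁ ≤ z₂ → C z₂ θ ≤ C z₁ θ) := by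
  have hint : ∀ θ ρ z : ℝ, Integrable (fun x => exp (ρ * (x - z))) (ν θ) :=
    fun θ ρ z => CFM_integrable (ν θ) (hmgf θ) ρ z
  have hbdd : ∀ z θ : ℝ, BddBelow (Set.range fun ρ : ℝ => ∫ x, exp (ρ * (x - z)) ∂(ν θ)) := by
    intro z θ
    refine ⟨0, ?_⟩
    rintro _ ⟨ρ, rfl⟩
    exact integral_nonneg fun x => (exp_pos _).le
  have hCle : ∀ z θ ρ : ℝ, C z θ ≤ ∫ x, exp (ρ * (x - z)) ∂(ν θ) := by
    intro z θ ρ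
    rw [hC]
    exact ciInf_le (hbdd z θ) ρ
  have hM0 : ∀ z θ : ℝ, ∫ x, exp ((0:ℝ) * (x - z)) ∂(ν θ) = 1 := by
    intro z θ
    haveI := hprob θ
    simp
  have hCone : ∀ z θ : ℝ, C z θ ≤ 1 := fun z θ => (hCle z θ 0).trans_eq (hM0 z θ)
  have hjen : ∀ θ ρ z : ℝ, exp (ρ * (θ - z)) ≤ ∫ x, exp (ρ * (x - z)) ∂(ν θ) := by
    intro θ ρ z
    haveI := hprob θ
    exact CFM_jensen (ν θ) θ (hmean θ) (hmgf θ) ρ z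
  have hdomIci : ∀ θ₁ θ₂ : ℝ, θ₁ ≤ θ₂ → ∀ c : ℝ, ν θ₁ (Set.Ici c) ≤ ν θ₂ (Set.Ici c) := by
    intro θ₁ θ₂ h12 c
    haveI := hprob θ₁; haveI := hprob θ₂
    have key := CFM_dom_Iio ν hprob hULE_le hULE_ge θ₁ θ₂ h12 c
    have e₁ : ν θ₁ (Set.Ici c) = 1 - ν θ₁ (Set.Iio c) := by
      rw [← Set.compl_Iio, prob_compl_eq_one_sub measurableSet_Iio]
    have e₂ : ν θ₂ (Set.Ici c) = 1 - ν θ₂ (Set.Iio c) := by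
      rw [← Set.compl_Iio, prob_compl_eq_one_sub measurableSet_Iio]
    rw [e₁, e₂]
    exact tsub_le_tsub_left key 1
  refine ⟨?_, ?_, ?_, ?_⟩
  · intro z θ₁ θ₂ h12 h2z
    rw [hC z θ₂]
    refine le_ciInf fun ρ => ?_
    rcases le_or_gt ρ 0 with hρ | hρ
    · calc C z θ₁ ≤ 1 := hCone z θ₁
        _ ≤ exp (ρ * (θ₂ - z)) := by
            rw [← exp_zero]
            exact exp_le_exp.2 (mul_nonneg_of_nonpos_of_nonpos hρ (by linarith : θ₂ - z ≤ 0))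
        _ ≤ ∫ x, exp (ρ * (x - z)) ∂(ν θ₂) := hjen θ₂ ρ z
    · exact (hCle z θ₁ ρ).trans (CFM_expint_mono_pos (ν θ₁) (ν θ₂) z ρ hρ
        (hdomIci θ₁ θ₂ h12) (hint θ₂ ρ z))
  · intro z θ₁ θ₂ hz1 h12
    rw [hC z θ₁]
    refine le_ciInf fun ρ => ?_
    rcases lt_or_ge ρ 0 with hρ | hρ
    · exact (hCle z θ₂ ρ).trans (CFM_expint_mono_neg (ν θ₂) (ν θ₁) z ρ hρ
        (CFM_dom_Iic ν hprob hULE_le hULE_ge θ₁ θ₂ h12) (hint θ₁ ρ z))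
    · calc C z θ₂ ≤ 1 := hCone z θ₂
        _ ≤ exp (ρ * (θ₁ - z)) := by
            rw [← exp_zero]
            exact exp_le_exp.2 (mul_nonneg hρ (by linarith))
        _ ≤ ∫ x, exp (ρ * (x - z)) ∂(ν θ₁) := hjen θ₁ ρ z
  · intro θ z₁ z₂ h12 h2θ
    rw [hC z₂ θ]
    refine le_ciInf fun ρ => ?_
    rcases le_or_gt ρ 0 with hρ | hρ
    · refine (hCle z₁ θ ρ).trans (integral_mono (hint θ ρ z₁) (hint θ ρ z₂) fun x => ?_)
      exact exp_le_exp.2 (mul_le_mul_of_nonpos_left (by linarith) hρ)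
    · calc C z₁ θ ≤ 1 := hCone z₁ θ
        _ ≤ exp (ρ * (θ - z₂)) := by
            rw [← exp_zero]
            exact exp_le_exp.2 (mul_nonneg hρ.le (by linarith))
        _ ≤ ∫ x, exp (ρ * (x - z₂)) ∂(ν θ) := hjen θ ρ z₂
  · intro θ z₁ z₂ hθ1 h12
    rw [hC z₁ θ]
    refine le_ciInf fun ρ => ?_
    rcases le_or_gt 0 ρ with hρ | hρ
    · refine (hCle z₂ θ ρ).trans (integral_mono (hint θ ρ z₂) (hint θ ρ z₁) fun x => ?_)
      exact exp_le_exp.2 (mul_le_mul_of_nonneg_left (by linarith) hρ)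
    · calc C z₂ θ ≤ 1 := hCone z₂ θ
        _ ≤ exp (ρ * (θ - z₁)) := by
            rw [← exp_zero]
            exact exp_le_exp.2 (mul_nonneg_of_nonpos_of_nonpos hρ.le (by linarith))
        _ ≤ ∫ x, exp (ρ * (x - z₁)) ∂(ν θ) := hjen θ ρ z₁
end
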